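/- arXiv:1411.1788 — 3 statements merged into one kernel-verified Lean document; each statement's English description precedes it below -/
import Mathlib

section
/- Let G be a nontrivial string and let a, b ∈ I5 = {−5,…,5} be integers with a ≡ b (mod 2) such that the pair (a,b) is valid for G. Then G admits an (a,b)-pseudoflow if one of the following holds: (a) β(G) is odd and a ≠ ±b; (b) β(G) is even and a = ±b; (c) β(G) ≥ 2 and either a is odd or a = 0 or b = 0. -/
/-!
Signed multigraphs (parallel edges allowed), two-terminal graphs,
series/parallel connections and flows, following the terminology of
Kaiser–Rollová, "Nowhere-zero flows in signed series-parallel graphs".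

Vertices and edges are labelled by natural numbers.  An edge `e` has the
two endvertices `fst e` and `snd e` (its two half-edges are the ends at
`fst e` and at `snd e`), and `sign e = true` means that `e` is positive.
-/

/-- The value `+1` (pointing towards its endvertex) or `-1` (pointing away)
of a Boolean direction of a half-edge. -/
def dirVal (b : Bool) : ℤ := if b then 1 else -1

/-- A signed multigraph. -/
structure SignedGraph where
  verts : Finset ℕ
  edges : Finset ℕ
  fst : ℕ → ℕ
  snd : ℕ → ℕ
  sign : ℕ → Bool
  fst_mem : ∀ e ∈ edges, fst e ∈ verts
  snd_mem : ∀ e ∈ edges, snd e ∈ verts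

namespace SignedGraph

/-- Edge `e` joins the vertices `u` and `v`. -/
def Joins (G : SignedGraph) (e u v : ℕ) : Prop :=
  (G.fst e = u ∧ G.snd e = v) ∨ (G.fst e = v ∧ G.snd e = u)

/-- `u` and `v` are adjacent (joined by some edge). -/
def Adj (G : SignedGraph) (u v : ℕ) : Prop := ∃ e ∈ G.edges, G.Joins e u v

/-- The degree of a vertex (each incidence of an edge counts once,
so loops count twice). -/
def degree (G : SignedGraph) (v : ℕ) : ℕ :=
  ∑ e ∈ G.edges, ((if G.fst e = v then 1 else 0) + (if G.snd e = v then 1 else 0))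

/-- `e` and `f` are parallel edges: distinct edges joining the same
pair of vertices. -/
def Parallel (G : SignedGraph) (e f : ℕ) : Prop :=
  e ≠ f ∧ ((G.fst e = G.fst f ∧ G.snd e = G.snd f) ∨
           (G.fst e = G.snd f ∧ G.snd e = G.fst f))

/-- `v` is contained in a 2-cycle (a cycle formed by two parallel edges). -/
def In2Cycle (G : SignedGraph) (v : ℕ) : Prop :=
  ∃ e ∈ G.edges, ∃ f ∈ G.edges, G.Parallel e f ∧ G.fst e ≠ G.snd e ∧
    (G.fst e = v ∨ G.snd e = v)

/-- `beta G` is the number of distinct 2-cycles of `G`. -/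
def beta (G : SignedGraph) : ℕ :=
  ((G.edges ×ˢ G.edges).filter fun p => p.1 < p.2 ∧ G.fst p.1 ≠ G.snd p.1 ∧
     ((G.fst p.1 = G.fst p.2 ∧ G.snd p.1 = G.snd p.2) ∨
      (G.fst p.1 = G.snd p.2 ∧ G.snd p.1 = G.fst p.2))).card

/-- An orientation of a signed graph: `o₁ e` (resp. `o₂ e`) tells whether the
half-edge of `e` at `fst e` (resp. at `snd e`) points towards its endvertex.
Of the two half-edges of a positive edge exactly one points towards its
endvertex, while for a negative edge none or both do. -/
def IsOrientation (G : SignedGraph) (o₁ o₂ : ℕ → Bool) : Prop :=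
  ∀ e ∈ G.edges, (G.sign e = true → o₁ e ≠ o₂ e) ∧ (G.sign e = false → o₁ e = o₂ e)

/-- The excess (inflow minus outflow) at a vertex `v`. -/
def excess (G : SignedGraph) (o₁ o₂ : ℕ → Bool) (φ : ℕ → ℤ) (v : ℕ) : ℤ :=
  ∑ e ∈ G.edges, ((if G.fst e = v then dirVal (o₁ e) * φ e else 0) +
                  (if G.snd e = v then dirVal (o₂ e) * φ e else 0))

/-- `(o₁, o₂, φ)` is a nowhere-zero `k`-flow on `G`: an orientation together
with a valuation of the edges by nonzero integers of absolute value less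
than `k` such that at every vertex the inflow equals the outflow. -/
structure IsNZFlow (G : SignedGraph) (k : ℕ) (o₁ o₂ : ℕ → Bool) (φ : ℕ → ℤ) : Prop where
  orient : G.IsOrientation o₁ o₂
  nonzero : ∀ e ∈ G.edges, φ e ≠ 0
  bounded : ∀ e ∈ G.edges, |φ e| < (k : ℤ)
  conserve : ∀ v ∈ G.verts, G.excess o₁ o₂ φ v = 0

/-- `G` admits a nowhere-zero `k`-flow. -/
def HasNZFlow (G : SignedGraph) (k : ℕ) : Prop := ∃ o₁ o₂ φ, G.IsNZFlow k o₁ o₂ φ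

/-- `G` is flow-admissible: it admits a nowhere-zero `k`-flow for some `k`. -/
def FlowAdmissible (G : SignedGraph) : Prop := ∃ k, G.HasNZFlow k

/-- `(vs, es)` is a cycle of `G`: distinct vertices `vs = [v₀, …, v_{m-1}]`,
distinct edges `es = [e₀, …, e_{m-1}]`, where `eᵢ` joins `vᵢ` and
`v_{i+1 (mod m)}`. -/
structure IsCycle (G : SignedGraph) (vs es : List ℕ) : Prop where
  nonempty : es ≠ []
  len : vs.length = es.length
  vnodup : vs.Nodup
  enodup : es.Nodup
  vmem : ∀ v ∈ vs, v ∈ G.verts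
  emem : ∀ e ∈ es, e ∈ G.edges
  link : ∀ i < es.length,
    G.Joins (es.getD i 0) (vs.getD i 0) (vs.getD ((i + 1) % vs.length) 0)

/-- The number of negative edges in a list of edges. -/
def negCount (G : SignedGraph) (es : List ℕ) : ℕ :=
  (es.filter fun e => G.sign e = false).length

/-- A balanced cycle: a cycle with an even number of negative edges. -/
def IsBalancedCycle (G : SignedGraph) (vs es : List ℕ) : Prop :=
  G.IsCycle vs es ∧ Even (G.negCount es)

/-- An unbalanced cycle: a cycle with an odd number of negative edges. -/
def IsUnbalancedCycle (G : SignedGraph) (vs es : List ℕ) : Prop :=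
  G.IsCycle vs es ∧ Odd (G.negCount es)

/-- A signed graph is unbalanced if it contains an unbalanced cycle. -/
def IsUnbalanced (G : SignedGraph) : Prop := ∃ vs es, G.IsUnbalancedCycle vs es

/-- `(vs, es)` is a path of `G` (possibly trivial, i.e. a single vertex). -/
structure IsPath (G : SignedGraph) (vs es : List ℕ) : Prop where
  nonempty : vs ≠ []
  len : vs.length = es.length + 1
  vnodup : vs.Nodup
  enodup : es.Nodup
  vmem : ∀ v ∈ vs, v ∈ G.verts
  emem : ∀ e ∈ es, e ∈ G.edges
  link : ∀ i < es.length, G.Joins (es.getD i 0) (vs.getD i 0) (vs.getD (i + 1) 0)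

/-- A barbell: two edge-disjoint unbalanced cycles together with a path,
which either joins two vertex-disjoint cycles and is internally
vertex-disjoint from them, or is the trivial path at the single
common vertex of the two cycles. -/
structure IsBarbell (G : SignedGraph) (vs₁ es₁ vs₂ es₂ pvs pes : List ℕ) : Prop where
  cyc1 : G.IsUnbalancedCycle vs₁ es₁
  cyc2 : G.IsUnbalancedCycle vs₂ es₂
  edge_disj : ∀ e ∈ es₁, e ∉ es₂
  path : G.IsPath pvs pes
  shape :
    ((∀ v ∈ vs₁, v ∉ vs₂) ∧
      pvs.getD 0 0 ∈ vs₁ ∧ pvs.getD (pvs.length - 1) 0 ∈ vs₂ ∧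
      (∀ i, 0 < i → i < pvs.length - 1 → pvs.getD i 0 ∉ vs₁ ∧ pvs.getD i 0 ∉ vs₂)) ∨
    (∃ w, w ∈ vs₁ ∧ w ∈ vs₂ ∧ (∀ v ∈ vs₁, v ∈ vs₂ → v = w) ∧ pvs = [w] ∧ pes = [])

/-- The edge `e` is contained in a signed circuit (a balanced cycle
or a barbell). -/
def InSignedCircuit (G : SignedGraph) (e : ℕ) : Prop :=
  (∃ vs es, G.IsBalancedCycle vs es ∧ e ∈ es) ∨
  (∃ vs₁ es₁ vs₂ es₂ pvs pes, G.IsBarbell vs₁ es₁ vs₂ es₂ pvs pes ∧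
    (e ∈ es₁ ∨ e ∈ es₂ ∨ e ∈ pes))

/-- `H` is a subgraph of `G` (with the same labels, endvertices and signs). -/
def IsSubgraph (H G : SignedGraph) : Prop :=
  H.verts ⊆ G.verts ∧ H.edges ⊆ G.edges ∧
  ∀ e ∈ H.edges, H.fst e = G.fst e ∧ H.snd e = G.snd e ∧ H.sign e = G.sign e

/-- Switching at a vertex `v`: the signs of all edges incident with `v`
(i.e. with exactly one end at `v`) are inverted. -/
def switchAt (G : SignedGraph) (v : ℕ) : SignedGraph where
  verts := G.verts
  edges := G.edges
  fst := G.fst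
  snd := G.snd
  sign := fun e => if xor (G.fst e == v) (G.snd e == v) then !(G.sign e) else G.sign e
  fst_mem := G.fst_mem
  snd_mem := G.snd_mem

/-- Connectedness of a (nonempty) signed graph. -/
def Connected (G : SignedGraph) : Prop :=
  G.verts.Nonempty ∧ ∀ u ∈ G.verts, ∀ v ∈ G.verts, Relation.ReflTransGen G.Adj u v

/-- Deletion of a vertex together with all incident edges. -/
def deleteVert (G : SignedGraph) (v : ℕ) : SignedGraph where
  verts := G.verts.erase v
  edges := G.edges.filter fun e => G.fst e ≠ v ∧ G.snd e ≠ v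
  fst := G.fst
  snd := G.snd
  sign := G.sign
  fst_mem := by
    intro e he
    simp only [Finset.mem_filter] at he
    exact Finset.mem_erase.mpr ⟨he.2.1, G.fst_mem e he.1⟩
  snd_mem := by
    intro e he
    simp only [Finset.mem_filter] at he
    exact Finset.mem_erase.mpr ⟨he.2.2, G.snd_mem e he.1⟩

/-- `G` is 2-connected: it is connected and remains connected after the
deletion of any single vertex. -/
def TwoConnected (G : SignedGraph) : Prop :=
  G.Connected ∧ ∀ v ∈ G.verts, (G.deleteVert v).Connected

end SignedGraph

/-- A two-terminal signed graph: a signed graph with two distinguished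
distinct vertices, the source terminal `s` and the target terminal `t`. -/
structure TTGraph extends SignedGraph where
  s : ℕ
  t : ℕ
  s_mem : s ∈ verts
  t_mem : t ∈ verts
  s_ne_t : s ≠ t

namespace TTGraph

/-- Switching at a vertex of a two-terminal signed graph. -/
def switchAt (G : TTGraph) (v : ℕ) : TTGraph where
  toSignedGraph := G.toSignedGraph.switchAt v
  s := G.s
  t := G.t
  s_mem := G.s_mem
  t_mem := G.t_mem
  s_ne_t := G.s_ne_t

end TTGraph

/-- Two two-terminal signed graphs are switching equivalent if one is
obtained from the other by a finite sequence of switchings. -/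
def SwitchEquiv (G G' : TTGraph) : Prop :=
  Relation.ReflTransGen (fun A B => ∃ v ∈ A.verts, B = A.switchAt v) G G'

/-- `G` is the series connection `S(H₁, H₂)`: `H₁` and `H₂` are subgraphs
of `G` sharing exactly the vertex `H₁.t = H₂.s`, partitioning the edges,
with `G.s = H₁.s` and `G.t = H₂.t`. -/
structure IsSeriesConn2 (G H₁ H₂ : TTGraph) : Prop where
  sub1 : SignedGraph.IsSubgraph H₁.toSignedGraph G.toSignedGraph
  sub2 : SignedGraph.IsSubgraph H₂.toSignedGraph G.toSignedGraph
  vert_union : H₁.verts ∪ H₂.verts = G.verts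
  vert_inter : H₁.verts ∩ H₂.verts = {H₁.t}
  mid : H₁.t = H₂.s
  edge_union : H₁.edges ∪ H₂.edges = G.edges
  edge_disj : Disjoint H₁.edges H₂.edges
  src : G.s = H₁.s
  tgt : G.t = H₂.t

/-- `G` is the parallel connection `P(H₁, H₂)`: `H₁` and `H₂` are subgraphs
of `G` sharing exactly the two terminals, partitioning the edges, with the
terminals of `G`, `H₁` and `H₂` identified. -/
structure IsParallelConn2 (G H₁ H₂ : TTGraph) : Prop where
  sub1 : SignedGraph.IsSubgraph H₁.toSignedGraph G.toSignedGraph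
  sub2 : SignedGraph.IsSubgraph H₂.toSignedGraph G.toSignedGraph
  vert_union : H₁.verts ∪ H₂.verts = G.verts
  vert_inter : H₁.verts ∩ H₂.verts = {H₁.s, H₁.t}
  src_eq : H₁.s = H₂.s
  tgt_eq : H₁.t = H₂.t
  edge_union : H₁.edges ∪ H₂.edges = G.edges
  edge_disj : Disjoint H₁.edges H₂.edges
  src : G.s = H₁.s
  tgt : G.t = H₁.t

/-- `G` is a (signed) copy of `K₂`: a single edge joining the two terminals. -/
def IsSignedK2 (G : TTGraph) : Prop :=
  G.verts = {G.s, G.t} ∧ ∃ e, G.edges = {e} ∧ G.toSignedGraph.Joins e G.s G.t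

/-- Series-parallel two-terminal graphs: obtained from copies of `K₂` by
iterated series and parallel connections. -/
inductive IsSP : TTGraph → Prop
  | k2 {G} : IsSignedK2 G → IsSP G
  | series {G H₁ H₂} : IsSeriesConn2 G H₁ H₂ → IsSP H₁ → IsSP H₂ → IsSP G
  | parallel {G H₁ H₂} : IsParallelConn2 G H₁ H₂ → IsSP H₁ → IsSP H₂ → IsSP G

/-- `G` is the series connection `S(H₁, …, Hₙ)` of the graphs in the list
(of length at least two). -/
inductive IsSeriesConnList : TTGraph → List TTGraph → Prop
  | two {G H₁ H₂} : IsSeriesConn2 G H₁ H₂ → IsSeriesConnList G [H₁, H₂]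
  | cons {G G' H l} : IsSeriesConn2 G H G' → IsSeriesConnList G' l →
      IsSeriesConnList G (H :: l)

/-- `G` is the parallel connection `P(H₁, …, Hₙ)` of the graphs in the list
(of length at least two). -/
inductive IsParallelConnList : TTGraph → List TTGraph → Prop
  | two {G H₁ H₂} : IsParallelConn2 G H₁ H₂ → IsParallelConnList G [H₁, H₂]
  | cons {G G' H l} : IsParallelConn2 G H G' → IsParallelConnList G' l →
      IsParallelConnList G (H :: l)

/-- `l` is the list of parts of `G` for a series connection: `G` is a series
connection of the series-parallel graphs in `l`, with `l` of maximum length. -/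
def IsSeriesPartsOf (G : TTGraph) (l : List TTGraph) : Prop :=
  IsSeriesConnList G l ∧ (∀ H ∈ l, IsSP H) ∧
  ∀ l', IsSeriesConnList G l' → (∀ H ∈ l', IsSP H) → l'.length ≤ l.length

/-- `l` is the list of parts of `G` for a parallel connection. -/
def IsParallelPartsOf (G : TTGraph) (l : List TTGraph) : Prop :=
  IsParallelConnList G l ∧ (∀ H ∈ l, IsSP H) ∧
  ∀ l', IsParallelConnList G l' → (∀ H ∈ l', IsSP H) → l'.length ≤ l.length

/-- `l` is the list of parts of `G`. -/
def IsPartsOf (G : TTGraph) (l : List TTGraph) : Prop :=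
  IsSeriesPartsOf G l ∨ IsParallelPartsOf G l

/-- `H` is a part of `G`. -/
def IsPart (H G : TTGraph) : Prop := ∃ l, IsPartsOf G l ∧ H ∈ l

/-- `H` is a piece of `G`: there is a sequence `H = H₀, H₁, …, Hₘ = G`
where each `Hⱼ` is a part of `H_{j+1}`; in particular `G` is a piece of
itself. -/
def IsPiece (H G : TTGraph) : Prop := Relation.ReflTransGen IsPart H G

/-- `G` is of series type: it is a series connection of its parts. -/
def IsSeriesType (G : TTGraph) : Prop := ∃ l, IsSeriesPartsOf G l

/-- `G` is of parallel type: it is a parallel connection of its parts. -/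
def IsParallelType (G : TTGraph) : Prop := ∃ l, IsParallelPartsOf G l

/-- `H` is an endpart of `G`: the first or last part of a series
decomposition of `G` into its parts. -/
def IsEndpartOf (H G : TTGraph) : Prop :=
  ∃ l, IsSeriesPartsOf G l ∧ (l.head? = some H ∨ l.getLast? = some H)

/-- `DepthLe G d`: the depth of `G` is at most `d`.  The depth of a signed
`K₂` is `0`; otherwise it is `1` plus the maximum depth of a part. -/
inductive DepthLe : TTGraph → ℕ → Prop
  | k2 {G d} : IsSignedK2 G → DepthLe G d
  | step {G l d} : IsPartsOf G l → (∀ H ∈ l, DepthLe H d) → DepthLe G (d + 1)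

/-- `HasDepth G d`: the depth of `G` is exactly `d`, i.e. `d` is the least
upper bound in the recursive definition of depth. -/
def HasDepth (G : TTGraph) (d : ℕ) : Prop :=
  DepthLe G d ∧ ∀ d' < d, ¬ DepthLe G d'

/-- `G` is reduced: each non-terminal vertex has degree at least `3`, and
no two parallel edges have the same sign. -/
def IsReducedGraph (G : TTGraph) : Prop :=
  (∀ v ∈ G.verts, v ≠ G.s → v ≠ G.t → 3 ≤ G.toSignedGraph.degree v) ∧
  (∀ e ∈ G.edges, ∀ f ∈ G.edges, G.toSignedGraph.Parallel e f → G.sign e ≠ G.sign f)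

/-- `G` is a positive `K₂` (denoted `K₂⁺`). -/
def IsPositiveK2 (G : TTGraph) : Prop :=
  IsSignedK2 G ∧ ∀ e ∈ G.edges, G.sign e = true

/-- `G` is the unbalanced 2-cycle `D`: two parallel edges of opposite signs
joining the two terminals. -/
def IsUnbalanced2Cycle (G : TTGraph) : Prop :=
  G.verts = {G.s, G.t} ∧ ∃ e f, e ≠ f ∧ G.edges = {e, f} ∧
    G.toSignedGraph.Joins e G.s G.t ∧ G.toSignedGraph.Joins f G.s G.t ∧
    G.sign e ≠ G.sign f

/-- `G` is a string: a copy of `K₂⁺` or `D`, or a series connection of copies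
of `K₂⁺` and `D`, in which every non-terminal vertex lies in a 2-cycle. -/
def IsString (G : TTGraph) : Prop :=
  (IsPositiveK2 G ∨ IsUnbalanced2Cycle G ∨
    ∃ l, IsSeriesConnList G l ∧ ∀ H ∈ l, IsPositiveK2 H ∨ IsUnbalanced2Cycle H) ∧
  ∀ v ∈ G.verts, v ≠ G.s → v ≠ G.t → G.toSignedGraph.In2Cycle v

/-- `G` is a necklace: a parallel connection of two strings, at least one of
which is nontrivial (has more than two vertices). -/
def IsNecklace (G : TTGraph) : Prop :=
  ∃ H₁ H₂, IsParallelConn2 G H₁ H₂ ∧ IsString H₁ ∧ IsString H₂ ∧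
    (2 < H₁.verts.card ∨ 2 < H₂.verts.card)

/-- `(o₁, o₂, φ)` is an `(a,b)`-pseudoflow on the two-terminal signed graph
`G`: like a nowhere-zero 6-flow, except that at the source terminal the
outflow exceeds the inflow by `a`, and at the target terminal the inflow
exceeds the outflow by `b`. -/
structure IsPseudoflow (G : TTGraph) (a b : ℤ) (o₁ o₂ : ℕ → Bool) (φ : ℕ → ℤ) :
    Prop where
  orient : G.toSignedGraph.IsOrientation o₁ o₂
  nonzero : ∀ e ∈ G.edges, φ e ≠ 0
  bounded : ∀ e ∈ G.edges, |φ e| < 6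
  conserve : ∀ v ∈ G.verts, v ≠ G.s → v ≠ G.t →
    G.toSignedGraph.excess o₁ o₂ φ v = 0
  out_s : G.toSignedGraph.excess o₁ o₂ φ G.s = -a
  in_t : G.toSignedGraph.excess o₁ o₂ φ G.t = b

/-- `G` admits an `(a,b)`-pseudoflow. -/
def HasPseudoflow (G : TTGraph) (a b : ℤ) : Prop :=
  ∃ o₁ o₂ φ, IsPseudoflow G a b o₁ o₂ φ

/-- `I₅ = {-5, …, 5}`. -/
noncomputable def I5 : Finset ℤ := Finset.Icc (-5) 5

/-- The pair `(a,b)` is valid for `G`: `a ≠ 0` or `deg(s) ≥ 2`, and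
`b ≠ 0` or `deg(t) ≥ 2`. -/
def ValidPair (G : TTGraph) (a b : ℤ) : Prop :=
  (a ≠ 0 ∨ 2 ≤ G.toSignedGraph.degree G.s) ∧
  (b ≠ 0 ∨ 2 ≤ G.toSignedGraph.degree G.t)

/-- `G` is a flow-admissible signed series-parallel graph with no
nowhere-zero 6-flow, with the minimum number of edges among all such
graphs. -/
def MinCounterexample (G : TTGraph) : Prop :=
  IsSP G ∧ G.toSignedGraph.FlowAdmissible ∧ ¬ G.toSignedGraph.HasNZFlow 6 ∧
  ∀ G' : TTGraph, IsSP G' → G'.toSignedGraph.FlowAdmissible →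
    ¬ G'.toSignedGraph.HasNZFlow 6 → G.edges.card ≤ G'.edges.card

/-- `W` is a copy of `S(K₂⁺, D, K₂⁺)`. -/
def IsSK2DK2 (W : TTGraph) : Prop :=
  ∃ A B C, IsSeriesConnList W [A, B, C] ∧ IsPositiveK2 A ∧
    IsUnbalanced2Cycle B ∧ IsPositiveK2 C

/-- `G'` is obtained from `G` by replacing the piece `H` (with terminals
`H.s`, `H.t`) by the two-terminal graph `W`: the edges and non-terminal
vertices of `H` are removed, `W` (whose new vertices are fresh) is added,
and its terminals are identified with the terminals of `H`. -/
def IsReplacement (G H G' W : TTGraph) : Prop :=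
  W.s = H.s ∧ W.t = H.t ∧ G'.s = G.s ∧ G'.t = G.t ∧
  W.verts ∩ G.verts ⊆ {H.s, H.t} ∧
  G'.verts = (G.verts \ (H.verts \ {H.s, H.t})) ∪ W.verts ∧
  G'.edges = (G.edges \ H.edges) ∪ W.edges ∧
  Disjoint (G.edges \ H.edges) W.edges ∧
  (∀ e ∈ G.edges \ H.edges,
    G'.fst e = G.fst e ∧ G'.snd e = G.snd e ∧ G'.sign e = G.sign e) ∧
  SignedGraph.IsSubgraph W.toSignedGraph G'.toSignedGraph

/-!
Pseudoflows glue along series connections: an `(a, c)`-pseudoflow on the first part and a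
`(c, b)`-pseudoflow on the second give an `(a, b)`-pseudoflow. On `K₂⁺` there is an
`(a, a)`-pseudoflow for every `a ≠ 0`, and on `D` an `(a, b)`-pseudoflow whenever `b ≠ ±a`
(value `(a + b) / 2` on the positive and `(b - a) / 2` on the negative edge). Since `β` counts
the copies of `D`, it suffices to find `a = c₀, c₁, …, c_β = b` in `I₅`, all of one parity,
with `c_{i+1} ≠ ±cᵢ` and the inner values nonzero. They are chosen greedily from the source:
the hypothesis on `(β, a, b)` passes to `(β - 1, c₁, b)` for a suitable `c₁`, because a value
of the right parity avoiding `0, ±a, ±b` exists unless `a, b` are even with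
`{|a|, |b|} = {2, 4}`. Nontriviality gives `β ≥ 1`, and validity of `(a, b)` provides the
nonzero values a copy of `K₂⁺` at either end needs.
-/

open Finset

namespace SignedGraph

variable {M : Type*} [AddCommMonoid M]

def incSum (G : SignedGraph) (A B : ℕ → M) (v : ℕ) : M :=
  ∑ e ∈ G.edges, ((if G.fst e = v then A e else 0) + (if G.snd e = v then B e else 0))

theorem degree_eq_incSum (G : SignedGraph) (v : ℕ) :
    G.degree v = G.incSum (fun _ => 1) (fun _ => 1) v := rfl

theorem excess_eq_incSum (G : SignedGraph) (o₁ o₂ : ℕ → Bool) (φ : ℕ → ℤ) (v : ℕ) :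
    G.excess o₁ o₂ φ v =
      G.incSum (fun e => dirVal (o₁ e) * φ e) (fun e => dirVal (o₂ e) * φ e) v := rfl

theorem incSum_eq_zero_of_notMem {G : SignedGraph} {A B : ℕ → M} {v : ℕ}
    (hv : v ∉ G.verts) : G.incSum A B v = 0 := by
  refine sum_eq_zero fun e he => ?_
  have h₁ : G.fst e ≠ v := fun h => hv (h ▸ G.fst_mem e he)
  have h₂ : G.snd e ≠ v := fun h => hv (h ▸ G.snd_mem e he)
  simp [h₁, h₂]

theorem incSum_congr {G : SignedGraph} {A B A' B' : ℕ → M} {v : ℕ}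
    (hA : ∀ e ∈ G.edges, A e = A' e) (hB : ∀ e ∈ G.edges, B e = B' e) :
    G.incSum A B v = G.incSum A' B' v :=
  sum_congr rfl fun e he => by rw [hA e he, hB e he]

theorem incSum_of_edge_partition {G H₁ H₂ : SignedGraph} (h₁ : H₁.IsSubgraph G)
    (h₂ : H₂.IsSubgraph G) (hU : H₁.edges ∪ H₂.edges = G.edges)
    (hD : Disjoint H₁.edges H₂.edges) (A B : ℕ → M) (v : ℕ) :
    G.incSum A B v = H₁.incSum A B v + H₂.incSum A B v := by
  have hsub {H : SignedGraph} (h : H.IsSubgraph G) :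
      ∑ e ∈ H.edges, ((if G.fst e = v then A e else 0) + (if G.snd e = v then B e else 0)) =
        H.incSum A B v :=
    sum_congr rfl fun e he => by rw [(h.2.2 e he).1, (h.2.2 e he).2.1]
  rw [incSum, ← hU, sum_union hD, hsub h₁, hsub h₂]

abbrev IsTwoCyclePair (G : SignedGraph) (p : ℕ × ℕ) : Prop :=
  p.1 < p.2 ∧ G.fst p.1 ≠ G.snd p.1 ∧
    ((G.fst p.1 = G.fst p.2 ∧ G.snd p.1 = G.snd p.2) ∨
      (G.fst p.1 = G.snd p.2 ∧ G.snd p.1 = G.fst p.2))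

theorem beta_eq_card (G : SignedGraph) :
    G.beta = #{p ∈ G.edges ×ˢ G.edges | G.IsTwoCyclePair p} := rfl

theorem beta_pos_of_in2Cycle {G : SignedGraph} {v : ℕ} (h : G.In2Cycle v) : 0 < G.beta := by
  obtain ⟨e, he, f, hf, ⟨hef, hends⟩, hloop, -⟩ := h
  rw [beta_eq_card, card_pos]
  rcases hef.lt_or_gt with hlt | hlt
  · exact ⟨(e, f), mem_filter.2 ⟨mem_product.2 ⟨he, hf⟩, hlt, hloop, hends⟩⟩
  · refine ⟨(f, e), mem_filter.2 ⟨mem_product.2 ⟨hf, he⟩, hlt, ?_⟩⟩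
    grind

end SignedGraph

namespace IsSeriesConn2

open SignedGraph

variable {G H₁ H₂ : TTGraph}

theorem eq_mid (hS : IsSeriesConn2 G H₁ H₂) {v : ℕ} (h₁ : v ∈ H₁.verts) (h₂ : v ∈ H₂.verts) :
    v = H₁.t :=
  mem_singleton.1 (hS.vert_inter ▸ mem_inter.2 ⟨h₁, h₂⟩)

theorem s_notMem (hS : IsSeriesConn2 G H₁ H₂) : G.s ∉ H₂.verts := fun h =>
  H₁.s_ne_t (hS.eq_mid H₁.s_mem (hS.src ▸ h))

theorem t_notMem (hS : IsSeriesConn2 G H₁ H₂) : G.t ∉ H₁.verts := fun h =>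
  H₂.s_ne_t (hS.mid ▸ (hS.eq_mid (hS.tgt ▸ h) H₂.t_mem).symm)

theorem incSum_eq {M : Type*} [AddCommMonoid M] (hS : IsSeriesConn2 G H₁ H₂) (A B : ℕ → M)
    (v : ℕ) :
    G.incSum A B v = H₁.incSum A B v + H₂.incSum A B v :=
  incSum_of_edge_partition hS.sub1 hS.sub2 hS.edge_union hS.edge_disj A B v

theorem degree_s (hS : IsSeriesConn2 G H₁ H₂) :
    G.degree G.s = H₁.degree H₁.s := by
  rw [degree_eq_incSum, hS.incSum_eq, incSum_eq_zero_of_notMem hS.s_notMem, add_zero,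
    hS.src, degree_eq_incSum]

theorem degree_t (hS : IsSeriesConn2 G H₁ H₂) :
    G.degree G.t = H₂.degree H₂.t := by
  rw [degree_eq_incSum, hS.incSum_eq, incSum_eq_zero_of_notMem hS.t_notMem, zero_add,
    hS.tgt, degree_eq_incSum]

/-- Both ends of such an edge would be the middle vertex `H₁.t`. -/
theorem not_isTwoCyclePair (hS : IsSeriesConn2 G H₁ H₂) {x y : ℕ}
    (hxy : x ∈ H₁.edges ∧ y ∈ H₂.edges ∨ x ∈ H₂.edges ∧ y ∈ H₁.edges) :
    ¬ G.IsTwoCyclePair (x, y) := by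
  have ends {H : TTGraph} (h : H.IsSubgraph G.toSignedGraph) {e : ℕ} (he : e ∈ H.edges) :
      G.fst e ∈ H.verts ∧ G.snd e ∈ H.verts :=
    ⟨(h.2.2 e he).1 ▸ H.fst_mem e he, (h.2.2 e he).2.1 ▸ H.snd_mem e he⟩
  rintro ⟨-, hloop, hends⟩
  have := hS.eq_mid (v := G.fst x)
  have := hS.eq_mid (v := G.snd x)
  rcases hxy with ⟨hx, hy⟩ | ⟨hx, hy⟩
  · have := ends hS.sub1 hx; have := ends hS.sub2 hy; grind
  · have := ends hS.sub2 hx; have := ends hS.sub1 hy; grind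

theorem beta_eq (hS : IsSeriesConn2 G H₁ H₂) : G.beta = H₁.beta + H₂.beta := by
  have hsub {H : TTGraph} (h : H.IsSubgraph G.toSignedGraph) :
      H.beta = #{p ∈ H.edges ×ˢ H.edges | G.IsTwoCyclePair p} := by
    refine congrArg card (filter_congr fun p hp => ?_)
    obtain ⟨h₁, h₂, -⟩ := h.2.2 _ (mem_product.1 hp).1
    obtain ⟨h₃, h₄, -⟩ := h.2.2 _ (mem_product.1 hp).2
    rw [h₁, h₂, h₃, h₄]
  rw [hsub hS.sub1, hsub hS.sub2, ← card_union_of_disjoint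
    (disjoint_filter_filter (disjoint_product.2 (Or.inl hS.edge_disj))), beta_eq_card]
  congr 1
  ext ⟨x, y⟩
  have := hS.not_isTwoCyclePair (x := x) (y := y)
  simp only [mem_filter, mem_product, mem_union, ← hS.edge_union]
  tauto

theorem mem_edges (hS : IsSeriesConn2 G H₁ H₂) {e : ℕ} (he : e ∈ G.edges) :
    e ∈ H₁.edges ∨ e ∈ H₂.edges ∧ e ∉ H₁.edges := by
  rw [← hS.edge_union, mem_union] at he
  by_cases h : e ∈ H₁.edges
  · exact Or.inl h
  · exact Or.inr ⟨he.resolve_left h, h⟩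

theorem excess_piecewise (hS : IsSeriesConn2 G H₁ H₂) (o₁ o₂ p₁ p₂ : ℕ → Bool)
    (φ ψ : ℕ → ℤ) (v : ℕ) :
    G.excess (H₁.edges.piecewise o₁ p₁) (H₁.edges.piecewise o₂ p₂)
        (H₁.edges.piecewise φ ψ) v =
      H₁.excess o₁ o₂ φ v + H₂.excess p₁ p₂ ψ v := by
  rw [excess_eq_incSum, hS.incSum_eq, excess_eq_incSum, excess_eq_incSum]
  congr 1
  · refine incSum_congr (fun e he => ?_) (fun e he => ?_) <;>
      simp only [piecewise_eq_of_mem _ _ _ he]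
  · refine incSum_congr (fun e he => ?_) (fun e he => ?_) <;>
      simp only [piecewise_eq_of_notMem _ _ _ (disjoint_right.1 hS.edge_disj he)]

theorem isOrientation_piecewise (hS : IsSeriesConn2 G H₁ H₂) {o₁ o₂ p₁ p₂ : ℕ → Bool}
    (h₁ : H₁.IsOrientation o₁ o₂) (h₂ : H₂.IsOrientation p₁ p₂) :
    G.IsOrientation (H₁.edges.piecewise o₁ p₁) (H₁.edges.piecewise o₂ p₂) := by
  intro e he
  rcases hS.mem_edges he with he₁ | ⟨he₂, he₁⟩
  · rw [← (hS.sub1.2.2 e he₁).2.2, piecewise_eq_of_mem _ _ _ he₁,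
      piecewise_eq_of_mem _ _ _ he₁]
    exact h₁ e he₁
  · rw [← (hS.sub2.2.2 e he₂).2.2, piecewise_eq_of_notMem _ _ _ he₁,
      piecewise_eq_of_notMem _ _ _ he₁]
    exact h₂ e he₂

theorem hasPseudoflow (hS : IsSeriesConn2 G H₁ H₂) {a b c : ℤ}
    (h₁ : HasPseudoflow H₁ a c) (h₂ : HasPseudoflow H₂ c b) : HasPseudoflow G a b := by
  obtain ⟨o₁, o₂, φ, P⟩ := h₁
  obtain ⟨p₁, p₂, ψ, Q⟩ := h₂
  have hval {R : ℤ → Prop} (hP : ∀ e ∈ H₁.edges, R (φ e)) (hQ : ∀ e ∈ H₂.edges, R (ψ e)) :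
      ∀ e ∈ G.edges, R (H₁.edges.piecewise φ ψ e) := fun e he => by
    rcases hS.mem_edges he with he₁ | ⟨he₂, he₁⟩
    · rw [piecewise_eq_of_mem _ _ _ he₁]; exact hP e he₁
    · rw [piecewise_eq_of_notMem _ _ _ he₁]; exact hQ e he₂
  refine ⟨_, _, _, hS.isOrientation_piecewise P.orient Q.orient,
    hval (R := (· ≠ 0)) P.nonzero Q.nonzero, hval (R := (|·| < 6)) P.bounded Q.bounded,
    fun v hv hvs hvt => ?_, ?_, ?_⟩
  · rw [hS.excess_piecewise]
    by_cases hmid : v = H₁.t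
    · rw [hmid, P.in_t, hS.mid, Q.out_s, add_neg_cancel]
    · rw [← hS.vert_union, mem_union] at hv
      rcases hv with hv | hv
      · rw [P.conserve v hv (hS.src ▸ hvs) hmid, excess_eq_incSum,
          incSum_eq_zero_of_notMem fun h => hmid (hS.eq_mid hv h), add_zero]
      · rw [Q.conserve v hv (hS.mid ▸ hmid) (hS.tgt ▸ hvt), excess_eq_incSum,
          incSum_eq_zero_of_notMem fun h => hmid (hS.eq_mid h hv), zero_add]
  · rw [hS.excess_piecewise, excess_eq_incSum H₂.toSignedGraph,
      incSum_eq_zero_of_notMem hS.s_notMem, hS.src, P.out_s, add_zero]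
  · rw [hS.excess_piecewise, excess_eq_incSum H₁.toSignedGraph,
      incSum_eq_zero_of_notMem hS.t_notMem, hS.tgt, Q.in_t, zero_add]

end IsSeriesConn2

namespace TTGraph

open SignedGraph

def IsDipole (G : TTGraph) : Prop :=
  G.verts = {G.s, G.t} ∧ ∀ g ∈ G.edges, G.Joins g G.s G.t

/-- The half-edge of `g` at `v` points towards `v`: positive edges are directed from `s`
to `t`, negative edges are introverted. -/
def dipoleDir (G : TTGraph) (g v : ℕ) : Bool := !G.sign g || v == G.t

variable {G : TTGraph}

theorem IsDipole.degree_eq_card (hG : G.IsDipole) {v : ℕ} (hv : v = G.s ∨ v = G.t) :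
    G.degree v = #G.edges := by
  rw [card_eq_sum_ones, SignedGraph.degree]
  refine sum_congr rfl fun g hg => ?_
  have hst := G.s_ne_t
  rcases hG.2 g hg with ⟨h₁, h₂⟩ | ⟨h₁, h₂⟩ <;> rcases hv with h | h <;>
    simp [h, h₁, h₂, hst, hst.symm]

theorem IsDipole.beta_eq_choose (hG : G.IsDipole) : G.beta = (#G.edges).choose 2 := by
  rw [beta_eq_card, ← card_product_filter_lt]
  refine congrArg card (filter_congr fun p hp => ?_)
  have := G.s_ne_t
  rcases hG.2 _ (mem_product.1 hp).1 with ⟨h₁, h₂⟩ | ⟨h₁, h₂⟩ <;>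
    rcases hG.2 _ (mem_product.1 hp).2 with ⟨h₃, h₄⟩ | ⟨h₃, h₄⟩ <;> grind

theorem incidence_dipoleDir {g : ℕ} (hg : G.Joins g G.s G.t) (x : ℤ) (v : ℕ) :
    ((if G.fst g = v then dirVal (G.dipoleDir g (G.fst g)) * x else 0) +
      (if G.snd g = v then dirVal (G.dipoleDir g (G.snd g)) * x else 0)) =
      if v = G.t then x else if v = G.s then (if G.sign g then -x else x) else 0 := by
  have hst := G.s_ne_t
  rcases eq_or_ne v G.t with rfl | ht
  · rcases hg with ⟨h₁, h₂⟩ | ⟨h₁, h₂⟩ <;> simp [h₁, h₂, dipoleDir, dirVal, hst]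
  rcases eq_or_ne v G.s with rfl | hs
  · rcases hg with ⟨h₁, h₂⟩ | ⟨h₁, h₂⟩ <;> cases hσ : G.sign g <;>
      simp [h₁, h₂, hσ, dipoleDir, dirVal, hst, hst.symm]
  · rcases hg with ⟨h₁, h₂⟩ | ⟨h₁, h₂⟩ <;> simp [h₁, h₂, hs, ht, hs.symm, ht.symm]

theorem IsDipole.isPseudoflow (hG : G.IsDipole) {φ : ℕ → ℤ} (h₀ : ∀ g ∈ G.edges, φ g ≠ 0)
    (h₆ : ∀ g ∈ G.edges, |φ g| < 6) :
    IsPseudoflow G (∑ g ∈ G.edges, if G.sign g then φ g else -φ g) (∑ g ∈ G.edges, φ g)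
      (fun g => G.dipoleDir g (G.fst g)) (fun g => G.dipoleDir g (G.snd g)) φ := by
  have hexcess (v : ℕ) : G.excess (fun g => G.dipoleDir g (G.fst g))
      (fun g => G.dipoleDir g (G.snd g)) φ v =
        ∑ g ∈ G.edges, if v = G.t then φ g else if v = G.s then
          (if G.sign g then -φ g else φ g) else 0 :=
    sum_congr rfl fun g hg => incidence_dipoleDir (hG.2 g hg) (φ g) v
  refine ⟨fun g hg => ?_, h₀, h₆, fun v hv hs ht => ?_, ?_, ?_⟩
  · rcases hG.2 g hg with ⟨h₁, h₂⟩ | ⟨h₁, h₂⟩ <;>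
      simp [dipoleDir, h₁, h₂, G.s_ne_t]
  · rw [hG.1, mem_insert, mem_singleton] at hv
    tauto
  · simp [hexcess, G.s_ne_t, ← sum_neg_distrib, apply_ite]
  · simp [hexcess]

end TTGraph

theorem mem_I5 {a : ℤ} : a ∈ I5 ↔ -5 ≤ a ∧ a ≤ 5 := mem_Icc

namespace IsPositiveK2

variable {G : TTGraph}

theorem isDipole (hG : IsPositiveK2 G) : G.IsDipole := by
  obtain ⟨⟨hV, e, hE, he⟩, -⟩ := hG
  exact ⟨hV, fun g hg => mem_singleton.1 (hE ▸ hg) ▸ he⟩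

theorem card_edges (hG : IsPositiveK2 G) : #G.edges = 1 := by
  obtain ⟨⟨-, e, hE, -⟩, -⟩ := hG
  rw [hE, card_singleton]

theorem beta_eq_zero (hG : IsPositiveK2 G) : G.beta = 0 := by
  rw [hG.isDipole.beta_eq_choose, hG.card_edges]; rfl

theorem degree_s (hG : IsPositiveK2 G) : G.degree G.s = 1 := by
  rw [hG.isDipole.degree_eq_card (.inl rfl), hG.card_edges]

theorem degree_t (hG : IsPositiveK2 G) : G.degree G.t = 1 := by
  rw [hG.isDipole.degree_eq_card (.inr rfl), hG.card_edges]

theorem hasPseudoflow (hG : IsPositiveK2 G) {a : ℤ} (ha : a ∈ I5) (ha₀ : a ≠ 0) :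
    HasPseudoflow G a a := by
  have h := hG.isDipole.isPseudoflow (φ := fun _ => a) (fun _ _ => ha₀)
    (fun _ _ => abs_lt.2 (by rw [mem_I5] at ha; omega))
  obtain ⟨⟨-, e, hE, -⟩, hsign⟩ := hG
  simp only [hE, sum_singleton, hsign e (hE ▸ mem_singleton_self e), if_true] at h
  exact ⟨_, _, _, h⟩

end IsPositiveK2

namespace IsUnbalanced2Cycle

variable {G : TTGraph}

theorem isDipole (hG : IsUnbalanced2Cycle G) : G.IsDipole := by
  obtain ⟨hV, e, f, -, hE, he, hf, -⟩ := hG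
  refine ⟨hV, fun g hg => ?_⟩
  rcases mem_insert.1 (hE ▸ hg) with rfl | hg
  · exact he
  · rwa [mem_singleton.1 hg]

theorem beta_eq_one (hG : IsUnbalanced2Cycle G) : G.beta = 1 := by
  rw [hG.isDipole.beta_eq_choose]
  obtain ⟨-, e, f, hef, hE, -⟩ := hG
  rw [hE, card_pair hef]; rfl

theorem hasPseudoflow (hG : IsUnbalanced2Cycle G) {a b : ℤ} (ha : a ∈ I5) (hb : b ∈ I5)
    (hpar : a % 2 = b % 2) (hab : a ≠ b) (hab' : a ≠ -b) : HasPseudoflow G a b := by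
  rw [mem_I5] at ha hb
  set φ : ℕ → ℤ := fun g => if G.sign g then (a + b) / 2 else (b - a) / 2
  have h := hG.isDipole.isPseudoflow (φ := φ) (fun g _ => by simp only [φ]; split_ifs <;> omega)
    (fun g _ => abs_lt.2 (by simp only [φ]; split_ifs <;> omega))
  obtain ⟨-, e, f, hef, hE, -, -, hσ⟩ := hG
  have hout : ∑ g ∈ G.edges, (if G.sign g then φ g else -φ g) = a := by
    simp only [hE, sum_pair hef, φ, Bool.eq_not.2 hσ]
    cases G.sign f <;> simp <;> omega
  have hin : ∑ g ∈ G.edges, φ g = b := by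
    simp only [hE, sum_pair hef, φ, Bool.eq_not.2 hσ]
    cases G.sign f <;> simp <;> omega
  exact ⟨_, _, _, hout ▸ hin ▸ h⟩

end IsUnbalanced2Cycle

/-- The hypothesis of the theorem on `(a, b)` for `β = k`, strengthened to `a = b`
when `k = 0`. -/
def Compatible (k : ℕ) (a b : ℤ) : Prop :=
  (k = 0 → a = b) ∧
    ((Odd k ∧ a ≠ b ∧ a ≠ -b) ∨ (Even k ∧ (a = b ∨ a = -b)) ∨
      (2 ≤ k ∧ (Odd a ∨ a = 0 ∨ b = 0)))

theorem compatible_iff {k : ℕ} {a b : ℤ} :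
    Compatible k a b ↔ (k = 0 → a = b) ∧
      ((k % 2 = 1 ∧ a ≠ b ∧ a ≠ -b) ∨ (k % 2 = 0 ∧ (a = b ∨ a = -b)) ∨
        (2 ≤ k ∧ (a % 2 = 1 ∨ a = 0 ∨ b = 0))) := by
  simp only [Compatible, Nat.odd_iff, Nat.even_iff, Int.odd_iff]

theorem compatible_zero {a b : ℤ} (h : Compatible 0 a b) : a = b := h.1 rfl

theorem compatible_one {a b : ℤ} (h : Compatible 1 a b) : a ≠ b ∧ a ≠ -b := by
  rw [compatible_iff] at h
  omega

/-- Among the values of the parity of `a`, the odd ones `±1, ±3, ±5` can avoid any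
four, and the even ones `±2, ±4` any two besides `0`. -/
theorem exists_mem_I5_avoid {a b : ℤ} (hpar : a % 2 = b % 2)
    (h : a = b ∨ a = -b ∨ a % 2 = 1 ∨ a = 0 ∨ b = 0) :
    ∃ c ∈ I5, c % 2 = a % 2 ∧ c ≠ 0 ∧ c ≠ a ∧ c ≠ -a ∧ c ≠ b ∧ c ≠ -b := by
  by_contra! hne
  have h₁ := hne 1; have h₂ := hne 2; have h₃ := hne 3; have h₄ := hne 4; have h₅ := hne 5
  simp only [mem_I5] at h₁ h₂ h₃ h₄ h₅
  omega

theorem Compatible.exists_mid {k : ℕ} {a b : ℤ} (hb : b ∈ I5) (hpar : a % 2 = b % 2)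
    (h : Compatible (k + 1) a b) :
    ∃ c ∈ I5, c % 2 = a % 2 ∧ c ≠ a ∧ c ≠ -a ∧ (c = 0 → k = 0) ∧ Compatible k c b := by
  simp only [compatible_iff] at h ⊢
  by_cases hbmid : k = 0 ∨ k % 2 = 0 ∧ b ≠ 0 ∧ b ≠ a ∧ b ≠ -a
  · exact ⟨b, hb, by omega⟩
  obtain ⟨c, hcI5, hc⟩ := exists_mem_I5_avoid hpar (by omega)
  exact ⟨c, hcI5, by omega⟩

inductive IsK2DSeries : TTGraph → Prop
  | piece {G} : IsPositiveK2 G ∨ IsUnbalanced2Cycle G → IsK2DSeries G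
  | series {G H G'} : IsSeriesConn2 G H G' → IsPositiveK2 H ∨ IsUnbalanced2Cycle H →
      IsK2DSeries G' → IsK2DSeries G

theorem IsSeriesConnList.isK2DSeries {G : TTGraph} {l : List TTGraph}
    (h : IsSeriesConnList G l) (hl : ∀ H ∈ l, IsPositiveK2 H ∨ IsUnbalanced2Cycle H) :
    IsK2DSeries G := by
  induction h with
  | two hS => exact .series hS (hl _ (by simp)) (.piece (hl _ (by simp)))
  | cons hS _ ih =>
    exact .series hS (hl _ (by simp)) (ih fun H hH => hl H (List.mem_cons_of_mem _ hH))

theorem IsString.isK2DSeries {G : TTGraph} (hG : IsString G) : IsK2DSeries G := by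
  rcases hG.1 with h | h | ⟨l, hl, hpieces⟩
  · exact .piece (.inl h)
  · exact .piece (.inr h)
  · exact hl.isK2DSeries hpieces

namespace IsK2DSeries

variable {G : TTGraph}

theorem degree_t_eq_one (hG : IsK2DSeries G) (hβ : G.beta = 0) : G.degree G.t = 1 := by
  induction hG with
  | piece hp =>
    rcases hp with hK | hD
    · exact hK.degree_t
    · exact absurd (hD.beta_eq_one ▸ hβ) one_ne_zero
  | series hS _ _ ih =>
    rw [hS.beta_eq] at hβ
    rw [hS.degree_t]
    exact ih (by omega)

theorem hasPseudoflow (hG : IsK2DSeries G) {a b : ℤ} (ha : a ∈ I5) (hb : b ∈ I5)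
    (hpar : a % 2 = b % 2) (hvalid : ValidPair G a b) (h : Compatible G.beta a b) :
    HasPseudoflow G a b := by
  induction hG generalizing a with
  | piece hp =>
    rcases hp with hK | hD
    · rw [hK.beta_eq_zero] at h
      obtain rfl := compatible_zero h
      exact hK.hasPseudoflow ha (hvalid.1.resolve_right (by rw [hK.degree_s]; omega))
    · rw [hD.beta_eq_one] at h
      exact hD.hasPseudoflow ha hb hpar (compatible_one h).1 (compatible_one h).2
  | @series G H G' hS hp hG' ih =>
    have hvalid_t : b ≠ 0 ∨ 2 ≤ G'.degree G'.t := hS.degree_t ▸ hvalid.2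
    rw [hS.beta_eq] at h
    rcases hp with hK | hD
    · rw [hK.beta_eq_zero, zero_add] at h
      have ha₀ : a ≠ 0 := hvalid.1.resolve_right (by rw [hS.degree_s, hK.degree_s]; omega)
      exact hS.hasPseudoflow (hK.hasPseudoflow ha ha₀) (ih ha hpar ⟨.inl ha₀, hvalid_t⟩ h)
    · rw [hD.beta_eq_one, add_comm] at h
      obtain ⟨c, hc, hcpar, hca, hca', hc₀, hcb⟩ := h.exists_mid hb hpar
      have hc₀' : c ≠ 0 := by
        rintro rfl
        have hβ := hc₀ rfl
        rw [hβ] at hcb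
        obtain rfl := compatible_zero hcb
        rw [hG'.degree_t_eq_one hβ] at hvalid_t
        omega
      exact hS.hasPseudoflow (hD.hasPseudoflow ha hc (by omega) hca.symm (by omega))
        (ih hc (by omega) ⟨.inl hc₀', hvalid_t⟩ hcb)

end IsK2DSeries

/-- Pseudoflows in nontrivial strings (Lemma 11 of the
paper). -/
theorem string_pseudoflow (G : TTGraph) (hstr : IsString G)
    (hnt : 2 < G.verts.card) (a b : ℤ) (ha : a ∈ I5) (hb : b ∈ I5)
    (hpar : a % 2 = b % 2) (hvalid : ValidPair G a b)
    (h : (Odd G.toSignedGraph.beta ∧ a ≠ b ∧ a ≠ -b) ∨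
         (Even G.toSignedGraph.beta ∧ (a = b ∨ a = -b)) ∨
         (2 ≤ G.toSignedGraph.beta ∧ (Odd a ∨ a = 0 ∨ b = 0))) :
    HasPseudoflow G a b := by
  obtain ⟨v, hv, hvst⟩ := exists_mem_notMem_of_card_lt_card (card_le_two.trans_lt hnt)
  rw [mem_insert, mem_singleton, not_or] at hvst
  have hβ : 0 < G.beta := SignedGraph.beta_pos_of_in2Cycle (hstr.2 v hv hvst.1 hvst.2)
  exact hstr.isK2DSeries.hasPseudoflow ha hb hpar hvalid ⟨fun h₀ => absurd h₀ hβ.ne', h⟩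
end

section
/- Let G be a necklace and let a, b ∈ I5 = {−5,…,5} be integers with a ≡ b (mod 2). Then G admits an (a,b)-pseudoflow if either a ≠ b and a ≠ −b, or a = b = 0 and β(G) ≥ 2. -/
/-!
Pseudoflows glue: along a series connection an `(x,y)`- and a `(y,z)`-pseudoflow combine to an
`(x,z)`-pseudoflow, and along a parallel connection the boundary values add. A copy of `K₂⁺`
carries the `(x,x)`-pseudoflows with `x ≠ 0`, a copy of `D` an `(x,y)`-pseudoflow whenever
`x ≡ y (mod 2)` and `x ≠ ±y`. Splitting off one piece at a time, a string with `k ≥ 1` copies of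
`D` carries every `(x,y)` with `x, y` odd (and `x ≠ ±y` if `k = 1`) and every `(x,y)` with
`x, y ∈ {±2, ±4}` such that `|x| = |y|` exactly when `k` is even. From `k = 2` on these sets are
2-periodic in `k`, so the choice of the values at the junctions is a finite check.

The nontrivial string contains a copy of `D`, and every 2-cycle of the necklace lies in a copy
of `D`, so `β(G) ≥ 2` forces two copies of `D` in total. Another finite check then splits `(a,b)`
between the two strings.
-/

namespace SignedGraph

lemma excess_eq_zero_of_notMem (G : SignedGraph) (o₁ o₂ : ℕ → Bool) (φ : ℕ → ℤ) {v : ℕ}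
    (hv : v ∉ G.verts) : G.excess o₁ o₂ φ v = 0 := by
  refine Finset.sum_eq_zero fun e he => ?_
  have h₁ : G.fst e ≠ v := fun h => hv (h ▸ G.fst_mem e he)
  have h₂ : G.snd e ≠ v := fun h => hv (h ▸ G.snd_mem e he)
  rw [if_neg h₁, if_neg h₂, add_zero]

lemma excess_piecewise {G A B : SignedGraph} (hA : A.IsSubgraph G) (hB : B.IsSubgraph G)
    (hu : A.edges ∪ B.edges = G.edges) (hd : Disjoint A.edges B.edges)
    (o₁ o₂ p₁ p₂ : ℕ → Bool) (φ ψ : ℕ → ℤ) (v : ℕ) :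
    G.excess (A.edges.piecewise o₁ p₁) (A.edges.piecewise o₂ p₂) (A.edges.piecewise φ ψ) v =
      A.excess o₁ o₂ φ v + B.excess p₁ p₂ ψ v := by
  unfold excess
  rw [← hu, Finset.sum_union hd]
  congr 1
  · refine Finset.sum_congr rfl fun e he => ?_
    obtain ⟨h₁, h₂, -⟩ := hA.2.2 e he
    simp [he, h₁, h₂]
  · refine Finset.sum_congr rfl fun e he => ?_
    obtain ⟨h₁, h₂, -⟩ := hB.2.2 e he
    simp [Finset.disjoint_right.mp hd he, h₁, h₂]

end SignedGraph

namespace TTGraph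

def boundaryExcess (G : TTGraph) (a b : ℤ) (v : ℕ) : ℤ :=
  (if v = G.s then -a else 0) + (if v = G.t then b else 0)

lemma boundaryExcess_add (G : TTGraph) (a b a' b' : ℤ) (v : ℕ) :
    G.boundaryExcess a b v + G.boundaryExcess a' b' v = G.boundaryExcess (a + a') (b + b') v := by
  unfold boundaryExcess
  split_ifs <;> ring

end TTGraph

lemma isPseudoflow_iff {G : TTGraph} {a b : ℤ} {o₁ o₂ : ℕ → Bool} {φ : ℕ → ℤ} :
    IsPseudoflow G a b o₁ o₂ φ ↔ G.IsOrientation o₁ o₂ ∧ (∀ e ∈ G.edges, φ e ≠ 0) ∧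
      (∀ e ∈ G.edges, |φ e| < 6) ∧ G.excess o₁ o₂ φ = G.boundaryExcess a b := by
  constructor
  · rintro ⟨horient, hnz, hbd, hcons, hs, ht⟩
    refine ⟨horient, hnz, hbd, funext fun v => ?_⟩
    have hst := G.s_ne_t
    by_cases hvs : v = G.s
    · subst hvs; simp [TTGraph.boundaryExcess, hs, hst]
    by_cases hvt : v = G.t
    · subst hvt; simp [TTGraph.boundaryExcess, ht, hst.symm]
    rw [TTGraph.boundaryExcess, if_neg hvs, if_neg hvt, add_zero]
    by_cases hv : v ∈ G.verts
    · exact hcons v hv hvs hvt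
    · exact G.excess_eq_zero_of_notMem o₁ o₂ φ hv
  · rintro ⟨horient, hnz, hbd, hex⟩
    have hst := G.s_ne_t
    refine ⟨horient, hnz, hbd, fun v _ hvs hvt => ?_, ?_, ?_⟩ <;> rw [hex]
    · simp [TTGraph.boundaryExcess, hvs, hvt]
    · simp [TTGraph.boundaryExcess, hst]
    · simp [TTGraph.boundaryExcess, hst.symm]

lemma HasPseudoflow.of_edge_partition {G A B : TTGraph}
    (hA : A.IsSubgraph G.toSignedGraph) (hB : B.IsSubgraph G.toSignedGraph)
    (hu : A.edges ∪ B.edges = G.edges) (hd : Disjoint A.edges B.edges)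
    {a b x₁ y₁ x₂ y₂ : ℤ} (h₁ : HasPseudoflow A x₁ y₁) (h₂ : HasPseudoflow B x₂ y₂)
    (hbd : ∀ v, A.boundaryExcess x₁ y₁ v + B.boundaryExcess x₂ y₂ v = G.boundaryExcess a b v) :
    HasPseudoflow G a b := by
  obtain ⟨o₁, o₂, φ, hφ⟩ := h₁
  obtain ⟨p₁, p₂, ψ, hψ⟩ := h₂
  rw [isPseudoflow_iff] at hφ hψ
  have hmem : ∀ e ∈ G.edges, e ∈ A.edges ∨ e ∉ A.edges ∧ e ∈ B.edges := fun e he => by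
    rw [← hu, Finset.mem_union] at he
    tauto
  refine ⟨A.edges.piecewise o₁ p₁, A.edges.piecewise o₂ p₂, A.edges.piecewise φ ψ,
    isPseudoflow_iff.2 ⟨fun e he => ?_, fun e he => ?_, fun e he => ?_, funext fun v => ?_⟩⟩
  · rcases hmem e he with heA | ⟨heA, heB⟩
    · simpa [heA, (hA.2.2 e heA).2.2] using hφ.1 e heA
    · simpa [heA, (hB.2.2 e heB).2.2] using hψ.1 e heB
  · rcases hmem e he with heA | ⟨heA, heB⟩
    · simpa [heA] using hφ.2.1 e heA
    · simpa [heA] using hψ.2.1 e heB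
  · rcases hmem e he with heA | ⟨heA, heB⟩
    · simpa [heA] using hφ.2.2.1 e heA
    · simpa [heA] using hψ.2.2.1 e heB
  · rw [SignedGraph.excess_piecewise hA hB hu hd, hφ.2.2.2, hψ.2.2.2, hbd]

lemma IsSeriesConn2.hasPseudoflow_s14 {G A B : TTGraph} (hc : IsSeriesConn2 G A B) {x y z : ℤ}
    (h₁ : HasPseudoflow A x y) (h₂ : HasPseudoflow B y z) : HasPseudoflow G x z :=
  .of_edge_partition hc.sub1 hc.sub2 hc.edge_union hc.edge_disj h₁ h₂ fun v => by
    simp only [TTGraph.boundaryExcess, ← hc.mid, hc.src, hc.tgt]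
    split_ifs <;> ring

lemma IsParallelConn2.hasPseudoflow_s14 {G A B : TTGraph} (hc : IsParallelConn2 G A B)
    {x₁ y₁ x₂ y₂ : ℤ} (h₁ : HasPseudoflow A x₁ y₁) (h₂ : HasPseudoflow B x₂ y₂) :
    HasPseudoflow G (x₁ + x₂) (y₁ + y₂) :=
  .of_edge_partition hc.sub1 hc.sub2 hc.edge_union hc.edge_disj h₁ h₂ fun v => by
    rw [show B.boundaryExcess x₂ y₂ v = A.boundaryExcess x₂ y₂ v by
      simp only [TTGraph.boundaryExcess, hc.src_eq, hc.tgt_eq], TTGraph.boundaryExcess_add]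
    simp only [TTGraph.boundaryExcess, hc.src, hc.tgt]

lemma IsParallelConn2.symm {G A B : TTGraph} (hc : IsParallelConn2 G A B) :
    IsParallelConn2 G B A where
  sub1 := hc.sub2
  sub2 := hc.sub1
  vert_union := by rw [Finset.union_comm, hc.vert_union]
  vert_inter := by rw [Finset.inter_comm, hc.vert_inter, hc.src_eq, hc.tgt_eq]
  src_eq := hc.src_eq.symm
  tgt_eq := hc.tgt_eq.symm
  edge_union := by rw [Finset.union_comm, hc.edge_union]
  edge_disj := hc.edge_disj.symm
  src := hc.src.trans hc.src_eq
  tgt := hc.tgt.trans hc.tgt_eq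

namespace TTGraph

/-- Read with `tip = fst` or `tip = snd`: a positive edge points from `s` to `t`, both
half-edges of a negative edge point away from their ends. -/
def stOrient (G : TTGraph) (tip : ℕ → ℕ) (e : ℕ) : Bool :=
  G.sign e && decide (tip e = G.t)

lemma isOrientation_stOrient {G : TTGraph} (hj : ∀ e ∈ G.edges, G.Joins e G.s G.t) :
    G.IsOrientation (G.stOrient G.fst) (G.stOrient G.snd) := fun e he => by
  have hst := G.s_ne_t
  rcases hj e he with ⟨h₁, h₂⟩ | ⟨h₁, h₂⟩ <;> cases hsg : G.sign e <;>
    simp [stOrient, hsg, h₁, h₂, hst]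

lemma excess_stOrient {G : TTGraph} (hj : ∀ e ∈ G.edges, G.Joins e G.s G.t) (φ : ℕ → ℤ)
    (v : ℕ) : G.excess (G.stOrient G.fst) (G.stOrient G.snd) φ v =
      ∑ e ∈ G.edges, G.boundaryExcess (φ e) (if G.sign e then φ e else -φ e) v := by
  refine Finset.sum_congr rfl fun e he => ?_
  have hst := G.s_ne_t
  rcases hj e he with ⟨h₁, h₂⟩ | ⟨h₁, h₂⟩ <;> cases hsg : G.sign e <;>
    simp only [stOrient, boundaryExcess, h₁, h₂, hsg, hst, decide_true, decide_false,
      Bool.and_true, Bool.and_false, dirVal] <;>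
    split_ifs <;> first | contradiction | omega

end TTGraph

lemma hasPseudoflow_of_forall_joins {G : TTGraph} (hj : ∀ e ∈ G.edges, G.Joins e G.s G.t)
    {φ : ℕ → ℤ} (hnz : ∀ e ∈ G.edges, φ e ≠ 0) (hbd : ∀ e ∈ G.edges, |φ e| < 6) {a b : ℤ}
    (ha : ∑ e ∈ G.edges, φ e = a)
    (hb : ∑ e ∈ G.edges, (if G.sign e then φ e else -φ e) = b) : HasPseudoflow G a b := by
  refine ⟨_, _, φ, isPseudoflow_iff.2 ⟨TTGraph.isOrientation_stOrient hj, hnz, hbd,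
    funext fun v => ?_⟩⟩
  rw [TTGraph.excess_stOrient hj, ← ha, ← hb]
  by_cases hvs : v = G.s <;> by_cases hvt : v = G.t <;>
    simp [TTGraph.boundaryExcess, hvs, hvt, Finset.sum_add_distrib]

lemma IsPositiveK2.hasPseudoflow_s14 {P : TTGraph} (hP : IsPositiveK2 P) {x : ℤ} (hx : x ∈ I5)
    (hx0 : x ≠ 0) : HasPseudoflow P x x := by
  obtain ⟨⟨-, e, hE, hj⟩, hsg⟩ := hP
  rw [I5, Finset.mem_Icc] at hx
  refine hasPseudoflow_of_forall_joins (φ := fun _ => x) (by simpa [hE] using hj)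
    (fun _ _ => hx0) (fun _ _ => abs_lt.2 ⟨by omega, by omega⟩) (by simp [hE]) ?_
  simp [hE, hsg e (by simp [hE])]

/-- Through the positive edge flows `(x + y) / 2` from `s` to `t`, the negative edge sends
`(x - y) / 2` out of both terminals. -/
lemma IsUnbalanced2Cycle.hasPseudoflow_s14 {P : TTGraph} (hP : IsUnbalanced2Cycle P) {x y : ℤ}
    (hx : x ∈ I5) (hy : y ∈ I5) (hpar : x % 2 = y % 2) (hne : x ≠ y) (hne' : x ≠ -y) :
    HasPseudoflow P x y := by
  obtain ⟨-, e, f, hef, hE, hje, hjf, hsg⟩ := hP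
  rw [I5, Finset.mem_Icc] at hx hy
  have hj : ∀ g ∈ P.edges, P.Joins g P.s P.t := by
    simp only [hE, Finset.mem_insert, Finset.mem_singleton, forall_eq_or_imp, forall_eq]
    exact ⟨hje, hjf⟩
  have hφ : ∀ g ∈ P.edges, (if P.sign g then (x + y) / 2 else (x - y) / 2) ≠ 0 ∧
      |if P.sign g then (x + y) / 2 else (x - y) / 2| < 6 := fun g _ => by
    split_ifs <;> exact ⟨by omega, abs_lt.2 ⟨by omega, by omega⟩⟩
  refine hasPseudoflow_of_forall_joins hj (fun g hg => (hφ g hg).1) (fun g hg => (hφ g hg).2)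
    ?_ ?_ <;>
    rw [hE, Finset.sum_pair hef] <;> cases hse : P.sign e <;> cases hsf : P.sign f <;>
    simp_all <;> omega

/-- Boundary values `(x, y)` of the pseudoflows that every string with `k` copies of `D`
admits. -/
def StringBoundary (k : ℕ) (x y : ℤ) : Prop :=
  x ∈ I5 ∧ y ∈ I5 ∧
    (k = 0 ∧ x = y ∧ x ≠ 0 ∨
      0 < k ∧ x % 2 = 1 ∧ y % 2 = 1 ∧ (k = 1 → x ≠ y ∧ x ≠ -y) ∨
      0 < k ∧ x % 2 = 0 ∧ y % 2 = 0 ∧ x ≠ 0 ∧ y ≠ 0 ∧ (x = y ∨ x = -y ↔ Even k))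

noncomputable instance (k : ℕ) (x y : ℤ) : Decidable (StringBoundary k x y) := by
  unfold StringBoundary; infer_instance

namespace StringBoundary

lemma add_two_iff {k : ℕ} (hk : 2 ≤ k) {x y : ℤ} :
    StringBoundary (k + 2) x y ↔ StringBoundary k x y := by
  simp only [StringBoundary, Nat.even_add, even_two, iff_true]
  grind

lemma of_zero_add {k : ℕ} {x y : ℤ} (h : StringBoundary (0 + k) x y) :
    StringBoundary 0 x x ∧ StringBoundary k x y := by
  rw [Nat.zero_add] at h
  obtain ⟨hx, hy, h⟩ := h
  refine ⟨⟨hx, hx, Or.inl ⟨rfl, rfl, ?_⟩⟩, hx, hy, h⟩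
  rcases h with ⟨-, -, h⟩ | ⟨-, h, -⟩ | ⟨-, -, -, h, -⟩ <;> omega

lemma exists_of_one_add : ∀ (k : ℕ), ∀ x ∈ I5, ∀ y ∈ I5, StringBoundary (1 + k) x y →
    ∃ z ∈ I5, StringBoundary 1 x z ∧ StringBoundary k z y
  | 0 => by decide
  | 1 => by decide
  | 2 => by decide
  | 3 => by decide
  | k + 4 => by
    simpa only [show 1 + (k + 4) = 1 + (k + 2) + 2 by omega,
      add_two_iff (show 2 ≤ 1 + (k + 2) by omega), add_two_iff (show 2 ≤ k + 2 by omega)]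
      using exists_of_one_add (k + 2)

lemma of_one {k : ℕ} (hk : 1 ≤ k) {x y : ℤ} (h : StringBoundary 1 x y) (hx : x % 2 = 1) :
    StringBoundary k x y := by
  obtain ⟨hxI, hyI, h⟩ := h
  refine ⟨hxI, hyI, Or.inr (Or.inl ⟨hk, hx, ?_⟩)⟩
  rcases h with ⟨h, -⟩ | ⟨-, -, hy, h⟩ | ⟨-, h, -⟩
  · omega
  · exact ⟨hy, fun hk1 => h rfl⟩
  · omega

lemma exists_sub_of_ne : ∀ (k : ℕ), ∀ a ∈ I5, ∀ b ∈ I5, a % 2 = b % 2 → a ≠ b → a ≠ -b →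
    ∃ x ∈ I5, ∃ y ∈ I5, StringBoundary k x y ∧ StringBoundary 1 (a - x) (b - y) ∧
      (a - x) % 2 = 1
  | 0 => by decide
  | 1 => by decide
  | 2 => by decide
  | 3 => by decide
  | k + 4 => by
    simpa only [add_two_iff (show 2 ≤ k + 2 by omega)] using exists_sub_of_ne (k + 2)

end StringBoundary

lemma exists_stringBoundary_add {k₁ k₂ : ℕ} (hk₁ : 1 ≤ k₁) {a b : ℤ} (ha : a ∈ I5)
    (hb : b ∈ I5) (hpar : a % 2 = b % 2)
    (h : (a ≠ b ∧ a ≠ -b) ∨ (a = 0 ∧ b = 0 ∧ 2 ≤ k₁ + k₂)) :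
    ∃ x₁ y₁ x₂ y₂, StringBoundary k₁ x₁ y₁ ∧ StringBoundary k₂ x₂ y₂ ∧
      x₁ + x₂ = a ∧ y₁ + y₂ = b := by
  rcases h with ⟨hab, hab'⟩ | ⟨rfl, rfl, hk⟩
  · obtain ⟨x, -, y, -, h₂, h₁, hodd⟩ :=
      StringBoundary.exists_sub_of_ne k₂ a ha b hb hpar hab hab'
    exact ⟨a - x, b - y, x, y, h₁.of_one hk₁ hodd, h₂, by ring, by ring⟩
  · rcases Nat.eq_zero_or_pos k₂ with rfl | hk₂
    · refine ⟨-1, -1, 1, 1, ?_, by decide, rfl, rfl⟩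
      simp [StringBoundary, I5]
      omega
    · refine ⟨1, 3, -1, -3, ?_, ?_, rfl, rfl⟩ <;> simp [StringBoundary, I5] <;> omega

def IsStringPiece (P : TTGraph) (k : ℕ) : Prop :=
  k = 0 ∧ IsPositiveK2 P ∨ k = 1 ∧ IsUnbalanced2Cycle P

inductive IsPieceChain : TTGraph → ℕ → Prop
  | piece {P k} : IsStringPiece P k → IsPieceChain P k
  | cons {G P G' k k'} : IsSeriesConn2 G P G' → IsStringPiece P k → IsPieceChain G' k' →
      IsPieceChain G (k + k')

namespace IsStringPiece

lemma hasPseudoflow_s14 {P : TTGraph} {k : ℕ} (hP : IsStringPiece P k) {x y : ℤ}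
    (h : StringBoundary k x y) : HasPseudoflow P x y := by
  obtain ⟨hx, hy, h⟩ := h
  rcases hP with ⟨rfl, hP⟩ | ⟨rfl, hP⟩
  · obtain ⟨-, rfl, hx0⟩ := h.resolve_right (by omega)
    exact hP.hasPseudoflow_s14 hx hx0
  · refine hP.hasPseudoflow_s14 hx hy ?_ ?_ ?_ <;>
      rcases h with ⟨h, -⟩ | ⟨-, h₁, h₂, h⟩ | ⟨-, h₁, h₂, -, -, h⟩ <;> simp at h <;> omega

lemma exists_split {P : TTGraph} {k k' : ℕ} (hP : IsStringPiece P k) {x y : ℤ}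
    (h : StringBoundary (k + k') x y) :
    ∃ z, StringBoundary k x z ∧ StringBoundary k' z y := by
  rcases hP with ⟨rfl, -⟩ | ⟨rfl, -⟩
  · exact ⟨x, h.of_zero_add⟩
  · obtain ⟨z, -, hz⟩ := StringBoundary.exists_of_one_add k' x h.1 y h.2.1 h
    exact ⟨z, hz⟩

end IsStringPiece

lemma IsPieceChain.hasPseudoflow_s14 {H : TTGraph} {k : ℕ} (hc : IsPieceChain H k) {x y : ℤ}
    (h : StringBoundary k x y) : HasPseudoflow H x y := by
  induction hc generalizing x with
  | piece hP => exact hP.hasPseudoflow_s14 h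
  | cons hs hP _ ih =>
    obtain ⟨z, h₁, h₂⟩ := hP.exists_split h
    exact hs.hasPseudoflow_s14 (hP.hasPseudoflow_s14 h₁) (ih h₂)

namespace SignedGraph

def twoCycles (G : SignedGraph) : Finset (ℕ × ℕ) :=
  (G.edges ×ˢ G.edges).filter fun p => p.1 < p.2 ∧ G.fst p.1 ≠ G.snd p.1 ∧
    ((G.fst p.1 = G.fst p.2 ∧ G.snd p.1 = G.snd p.2) ∨
      (G.fst p.1 = G.snd p.2 ∧ G.snd p.1 = G.fst p.2))

lemma beta_eq_card_twoCycles (G : SignedGraph) : G.beta = G.twoCycles.card := rfl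

lemma mem_twoCycles {G : SignedGraph} {p : ℕ × ℕ} :
    p ∈ G.twoCycles ↔ p.1 ∈ G.edges ∧ p.2 ∈ G.edges ∧ p.1 < p.2 ∧ G.fst p.1 ≠ G.snd p.1 ∧
      G.Joins p.2 (G.fst p.1) (G.snd p.1) := by
  simp only [twoCycles, Finset.mem_filter, Finset.mem_product, Joins]
  grind

lemma Joins.swap {G : SignedGraph} {e f : ℕ} (h : G.Joins f (G.fst e) (G.snd e)) :
    G.Joins e (G.fst f) (G.snd f) := by
  unfold Joins at h ⊢
  grind

lemma Joins.fst_ne_snd {G : SignedGraph} {f u v : ℕ} (h : G.Joins f u v) (huv : u ≠ v) :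
    G.fst f ≠ G.snd f := by
  rcases h with ⟨h, h'⟩ | ⟨h, h'⟩ <;> rw [h, h']
  exacts [huv, huv.symm]

lemma Joins.mem_verts {G B : SignedGraph} (hB : B.IsSubgraph G) {f u v : ℕ}
    (hf : f ∈ B.edges) (h : G.Joins f u v) : u ∈ B.verts ∧ v ∈ B.verts := by
  obtain ⟨h₁, h₂, -⟩ := hB.2.2 f hf
  have hfst := B.fst_mem f hf
  have hsnd := B.snd_mem f hf
  rw [h₁] at hfst
  rw [h₂] at hsnd
  rcases h with ⟨rfl, rfl⟩ | ⟨rfl, rfl⟩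
  · exact ⟨hfst, hsnd⟩
  · exact ⟨hsnd, hfst⟩

lemma IsSubgraph.mem_twoCycles {H G : SignedGraph} (hH : H.IsSubgraph G) {p : ℕ × ℕ}
    (hp : p ∈ G.twoCycles) (h₁ : p.1 ∈ H.edges) (h₂ : p.2 ∈ H.edges) : p ∈ H.twoCycles := by
  obtain ⟨-, -, hlt, hne, hj⟩ := SignedGraph.mem_twoCycles.1 hp
  obtain ⟨a₁, a₂, -⟩ := hH.2.2 _ h₁
  obtain ⟨b₁, b₂, -⟩ := hH.2.2 _ h₂
  refine SignedGraph.mem_twoCycles.2 ⟨h₁, h₂, hlt, ?_, ?_⟩ <;>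
    simpa only [Joins, a₁, a₂, b₁, b₂]

lemma twoCycles_subset_union {G A B : SignedGraph} (hA : A.IsSubgraph G) (hB : B.IsSubgraph G)
    (hloop : ∀ e ∈ A.edges, A.fst e ∈ B.verts → A.snd e ∈ B.verts → A.fst e = A.snd e)
    (hu : A.edges ∪ B.edges = G.edges) :
    G.twoCycles ⊆ A.twoCycles ∪ B.twoCycles := by
  have hcross : ∀ e ∈ A.edges, ∀ f ∈ B.edges, G.fst e ≠ G.snd e →
      ¬ G.Joins f (G.fst e) (G.snd e) := fun e he f hf hne hj => by
    obtain ⟨h₁, h₂, -⟩ := hA.2.2 e he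
    obtain ⟨hfst, hsnd⟩ := hj.mem_verts hB hf
    rw [← h₁] at hfst
    rw [← h₂] at hsnd
    rw [← h₁, ← h₂] at hne
    exact hne (hloop e he hfst hsnd)
  intro p hp
  obtain ⟨h₁, h₂, -, hne, hj⟩ := mem_twoCycles.1 hp
  rw [← hu, Finset.mem_union] at h₁ h₂
  rw [Finset.mem_union]
  rcases h₁ with h₁ | h₁ <;> rcases h₂ with h₂ | h₂
  · exact Or.inl (hA.mem_twoCycles hp h₁ h₂)
  · exact (hcross _ h₁ _ h₂ hne hj).elim
  · exact (hcross _ h₂ _ h₁ (hj.fst_ne_snd hne) hj.swap).elim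
  · exact Or.inr (hB.mem_twoCycles hp h₁ h₂)

lemma beta_le_add {G A B : SignedGraph} (hA : A.IsSubgraph G) (hB : B.IsSubgraph G)
    (hloop : ∀ e ∈ A.edges, A.fst e ∈ B.verts → A.snd e ∈ B.verts → A.fst e = A.snd e)
    (hu : A.edges ∪ B.edges = G.edges) : G.beta ≤ A.beta + B.beta :=
  (Finset.card_le_card (twoCycles_subset_union hA hB hloop hu)).trans (Finset.card_union_le _ _)

lemma one_le_beta_of_in2Cycle {G : SignedGraph} {v : ℕ} (h : G.In2Cycle v) : 1 ≤ G.beta := by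
  obtain ⟨e, he, f, hf, ⟨hef, hpar⟩, hne, -⟩ := h
  have hj : G.Joins f (G.fst e) (G.snd e) := by
    unfold Joins
    grind
  rw [beta_eq_card_twoCycles, Finset.one_le_card]
  rcases hef.lt_or_gt with hlt | hlt
  · exact ⟨(e, f), mem_twoCycles.2 ⟨he, hf, hlt, hne, hj⟩⟩
  · exact ⟨(f, e), mem_twoCycles.2 ⟨hf, he, hlt, hj.fst_ne_snd hne, hj.swap⟩⟩

end SignedGraph

lemma IsSeriesConn2.eq_mid_s14 {G A B : TTGraph} (hc : IsSeriesConn2 G A B) {v : ℕ}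
    (hA : v ∈ A.verts) (hB : v ∈ B.verts) : v = A.t := by
  have h := Finset.mem_inter.2 ⟨hA, hB⟩
  rwa [hc.vert_inter, Finset.mem_singleton] at h

lemma IsSeriesConn2.not_joins_terminals {G A B : TTGraph} (hc : IsSeriesConn2 G A B) :
    ∀ e ∈ G.edges, ¬ G.Joins e G.s G.t := by
  intro e he hj
  rw [← hc.edge_union, Finset.mem_union] at he
  rcases he with he | he
  · have ht := hc.eq_mid_s14 (hj.mem_verts hc.sub1 he).2 (hc.tgt ▸ B.t_mem)
    exact B.s_ne_t (by rw [← hc.mid, ← ht, hc.tgt])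
  · have hs := hc.eq_mid_s14 (hc.src ▸ A.s_mem) (hj.mem_verts hc.sub2 he).1
    exact A.s_ne_t (by rw [← hs, hc.src])

lemma IsParallelConn2.beta_le {G A B : TTGraph} (hc : IsParallelConn2 G A B)
    (hst : ∀ e ∈ A.edges, ¬ A.Joins e A.s A.t) :
    G.toSignedGraph.beta ≤ A.toSignedGraph.beta + B.toSignedGraph.beta := by
  refine SignedGraph.beta_le_add hc.sub1 hc.sub2 (fun e he h₁ h₂ => ?_) hc.edge_union
  have hterm : ∀ v ∈ B.verts, v ∈ A.verts → v = A.s ∨ v = A.t := fun v hB hA => by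
    have h := Finset.mem_inter.2 ⟨hA, hB⟩
    rwa [hc.vert_inter, Finset.mem_insert, Finset.mem_singleton] at h
  rcases hterm _ h₁ (A.fst_mem e he) with hs | ht <;>
    rcases hterm _ h₂ (A.snd_mem e he) with hs' | ht'
  · rw [hs, hs']
  · exact (hst e he (Or.inl ⟨hs, ht'⟩)).elim
  · exact (hst e he (Or.inr ⟨ht, hs'⟩)).elim
  · rw [ht, ht']

namespace IsStringPiece

lemma beta_le {P : TTGraph} {k : ℕ} (hP : IsStringPiece P k) : P.toSignedGraph.beta ≤ k := by
  rw [SignedGraph.beta_eq_card_twoCycles]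
  rcases hP with ⟨rfl, ⟨-, e, hE, -⟩, -⟩ | ⟨rfl, -, e, f, -, hE, -⟩
  · refine (Finset.card_eq_zero.2 (Finset.eq_empty_of_forall_notMem fun p hp => ?_)).le
    obtain ⟨h₁, h₂, hlt, -⟩ := SignedGraph.mem_twoCycles.1 hp
    rw [hE, Finset.mem_singleton] at h₁ h₂
    omega
  · refine Finset.card_le_one.2 fun p hp q hq => ?_
    obtain ⟨hp₁, hp₂, hplt, -⟩ := SignedGraph.mem_twoCycles.1 hp
    obtain ⟨hq₁, hq₂, hqlt, -⟩ := SignedGraph.mem_twoCycles.1 hq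
    simp only [hE, Finset.mem_insert, Finset.mem_singleton] at hp₁ hp₂ hq₁ hq₂
    ext <;> omega

lemma exists_of_piece {P : TTGraph} (h : IsPositiveK2 P ∨ IsUnbalanced2Cycle P) :
    ∃ k, IsStringPiece P k :=
  h.elim (fun h => ⟨0, Or.inl ⟨rfl, h⟩⟩) fun h => ⟨1, Or.inr ⟨rfl, h⟩⟩

end IsStringPiece

lemma IsPieceChain.beta_le {H : TTGraph} {k : ℕ} (hc : IsPieceChain H k) :
    H.toSignedGraph.beta ≤ k := by
  induction hc with
  | piece hP => exact hP.beta_le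
  | @cons G P G' k k' hs hP _ ih =>
    refine (SignedGraph.beta_le_add hs.sub1 hs.sub2 (fun e he h₁ h₂ => ?_) hs.edge_union).trans
      (add_le_add hP.beta_le ih)
    rw [hs.eq_mid_s14 (P.fst_mem e he) h₁, hs.eq_mid_s14 (P.snd_mem e he) h₂]

lemma IsSeriesConnList.exists_isPieceChain {H : TTGraph} {l : List TTGraph}
    (hl : IsSeriesConnList H l) (hp : ∀ P ∈ l, IsPositiveK2 P ∨ IsUnbalanced2Cycle P) :
    ∃ k, IsPieceChain H k := by
  induction hl with
  | @two G P Q hc =>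
    obtain ⟨k₁, h₁⟩ := IsStringPiece.exists_of_piece (hp P (by simp))
    obtain ⟨k₂, h₂⟩ := IsStringPiece.exists_of_piece (hp Q (by simp))
    exact ⟨_, .cons hc h₁ (.piece h₂)⟩
  | @cons G G' P l hc _ ih =>
    obtain ⟨k₁, h₁⟩ := IsStringPiece.exists_of_piece (hp P (by simp))
    obtain ⟨k₂, h₂⟩ := ih fun P hP => hp P (List.mem_cons_of_mem _ hP)
    exact ⟨_, .cons hc h₁ h₂⟩

namespace IsString

lemma exists_isPieceChain {H : TTGraph} (hs : IsString H) : ∃ k, IsPieceChain H k := by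
  rcases hs.1 with h | h | ⟨l, hl, hp⟩
  · exact ⟨0, .piece (Or.inl ⟨rfl, h⟩)⟩
  · exact ⟨1, .piece (Or.inr ⟨rfl, h⟩)⟩
  · exact hl.exists_isPieceChain hp

/-- An inner vertex lies on a 2-cycle, which is a copy of `D`. -/
lemma exists_isPieceChain_of_nontrivial {H : TTGraph} (hs : IsString H)
    (hcard : 2 < H.verts.card) :
    (∃ k, 1 ≤ k ∧ IsPieceChain H k) ∧ ∀ e ∈ H.edges, ¬ H.Joins e H.s H.t := by
  have hlt : ({H.s, H.t} : Finset ℕ).card < H.verts.card := Finset.card_le_two.trans_lt hcard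
  obtain ⟨k, hc⟩ := hs.exists_isPieceChain
  obtain ⟨v, hv, hvst⟩ := Finset.exists_mem_notMem_of_card_lt_card hlt
  rw [Finset.mem_insert, Finset.mem_singleton, not_or] at hvst
  refine ⟨⟨k, (SignedGraph.one_le_beta_of_in2Cycle (hs.2 v hv hvst.1 hvst.2)).trans hc.beta_le,
    hc⟩, ?_⟩
  rcases hs.1 with h | h | ⟨l, hl, -⟩
  · rw [h.1.1] at hlt; omega
  · rw [h.1] at hlt; omega
  · obtain ⟨A, B, hAB⟩ : ∃ A B, IsSeriesConn2 H A B := by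
      cases hl with
      | two hc => exact ⟨_, _, hc⟩
      | cons hc _ => exact ⟨_, _, hc⟩
    exact hAB.not_joins_terminals

end IsString

/-- Pseudoflows in necklaces (Lemma 12 of the paper). -/
theorem necklace_pseudoflow (G : TTGraph) (hneck : IsNecklace G)
    (a b : ℤ) (ha : a ∈ I5) (hb : b ∈ I5) (hpar : a % 2 = b % 2)
    (h : (a ≠ b ∧ a ≠ -b) ∨ (a = 0 ∧ b = 0 ∧ 2 ≤ G.toSignedGraph.beta)) :
    HasPseudoflow G a b := by
  obtain ⟨H₁, H₂, hpc, hs₁, hs₂, hnt⟩ := hneck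
  wlog hnt₁ : 2 < H₁.verts.card generalizing H₁ H₂
  · exact this H₂ H₁ hpc.symm hs₂ hs₁ hnt.symm (hnt.resolve_left hnt₁)
  obtain ⟨⟨k₁, hk₁, hc₁⟩, hst⟩ := hs₁.exists_isPieceChain_of_nontrivial hnt₁
  obtain ⟨k₂, hc₂⟩ := hs₂.exists_isPieceChain
  have hβ : G.toSignedGraph.beta ≤ k₁ + k₂ :=
    (hpc.beta_le hst).trans (add_le_add hc₁.beta_le hc₂.beta_le)
  obtain ⟨x₁, y₁, x₂, y₂, h₁, h₂, rfl, rfl⟩ := exists_stringBoundary_add hk₁ ha hb hpar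
    (h.imp_right fun ⟨ha₀, hb₀, hβ₂⟩ => ⟨ha₀, hb₀, hβ₂.trans hβ⟩)
  exact hpc.hasPseudoflow_s14 (hc₁.hasPseudoflow_s14 h₁) (hc₂.hasPseudoflow_s14 h₂)
end

section
/- Every flow-admissible string admits a nowhere-zero 6-flow, and every flow-admissible necklace admits a nowhere-zero 6-flow. -/
/-! Flow-admissibility rules out a vertex of degree one and a single negative edge (summing
the conservation law over all vertices leaves twice the value on that edge). Otherwise the flow
is assembled from pseudoflows, which compose along series connections and add up along
parallel ones. A positive edge passes its value on unchanged, while an unbalanced 2-cycle with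
values `x` and `y` on its positive and negative edge turns the value `x + y` entering it into
`x - y`. Along a string whose end parts are 2-cycles the intermediate values can be chosen in
`{-5, …, 5}` with `0` at both ends; the two strings of a necklace carry `1 → b` and `-1 → -b`
with `b ∈ {1, 3}`, which cancel at the terminals. -/

open Finset SignedGraph

namespace SignedGraph

section IncidenceSum

variable {M : Type*} [AddCommMonoid M]

def incidenceSum (G : SignedGraph) (f₁ f₂ : ℕ → M) (v : ℕ) : M :=
  ∑ e ∈ G.edges, ((if G.fst e = v then f₁ e else 0) + (if G.snd e = v then f₂ e else 0))

theorem degree_eq_incidenceSum (G : SignedGraph) (v : ℕ) :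
    G.degree v = G.incidenceSum (fun _ => 1) (fun _ => 1) v := rfl

theorem excess_eq_incidenceSum (G : SignedGraph) (o₁ o₂ : ℕ → Bool) (φ : ℕ → ℤ) (v : ℕ) :
    G.excess o₁ o₂ φ v =
      G.incidenceSum (fun e => dirVal (o₁ e) * φ e) (fun e => dirVal (o₂ e) * φ e) v := rfl

theorem incidenceSum_of_notMem {G : SignedGraph} {v : ℕ} (hv : v ∉ G.verts) (f₁ f₂ : ℕ → M) :
    G.incidenceSum f₁ f₂ v = 0 :=
  sum_eq_zero fun e he => by
    rw [if_neg fun h : G.fst e = v => hv (h ▸ G.fst_mem e he),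
      if_neg fun h : G.snd e = v => hv (h ▸ G.snd_mem e he), add_zero]

theorem incidenceSum_congr {G : SignedGraph} {f₁ f₂ g₁ g₂ : ℕ → M}
    (h : ∀ e ∈ G.edges, f₁ e = g₁ e ∧ f₂ e = g₂ e) (v : ℕ) :
    G.incidenceSum f₁ f₂ v = G.incidenceSum g₁ g₂ v :=
  sum_congr rfl fun e he => by rw [(h e he).1, (h e he).2]

end IncidenceSum

theorem excess_of_notMem {G : SignedGraph} {v : ℕ} (hv : v ∉ G.verts) (o₁ o₂ : ℕ → Bool)
    (φ : ℕ → ℤ) : G.excess o₁ o₂ φ v = 0 :=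
  incidenceSum_of_notMem hv _ _

structure IsEdgeSplit (G H₁ H₂ : SignedGraph) : Prop where
  sub₁ : H₁.IsSubgraph G
  sub₂ : H₂.IsSubgraph G
  edge_union : H₁.edges ∪ H₂.edges = G.edges
  edge_disj : Disjoint H₁.edges H₂.edges

namespace IsEdgeSplit

variable {G H₁ H₂ : SignedGraph}

theorem incidenceSum_eq (h : G.IsEdgeSplit H₁ H₂) {M : Type*} [AddCommMonoid M]
    (f₁ f₂ : ℕ → M) (v : ℕ) :
    G.incidenceSum f₁ f₂ v = H₁.incidenceSum f₁ f₂ v + H₂.incidenceSum f₁ f₂ v := by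
  rw [incidenceSum, ← h.edge_union, sum_union h.edge_disj]
  congr 1 <;> refine sum_congr rfl fun e he => ?_
  · obtain ⟨h₁, h₂, -⟩ := h.sub₁.2.2 e he; rw [h₁, h₂]
  · obtain ⟨h₁, h₂, -⟩ := h.sub₂.2.2 e he; rw [h₁, h₂]

theorem degree_eq (h : G.IsEdgeSplit H₁ H₂) (v : ℕ) : G.degree v = H₁.degree v + H₂.degree v :=
  h.incidenceSum_eq _ _ v

theorem excess_piecewise (h : G.IsEdgeSplit H₁ H₂) (o₁ o₂ p₁ p₂ : ℕ → Bool) (φ ψ : ℕ → ℤ)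
    (v : ℕ) :
    G.excess (H₁.edges.piecewise o₁ p₁) (H₁.edges.piecewise o₂ p₂) (H₁.edges.piecewise φ ψ) v =
      H₁.excess o₁ o₂ φ v + H₂.excess p₁ p₂ ψ v := by
  rw [excess_eq_incidenceSum, h.incidenceSum_eq]
  congr 1 <;> refine incidenceSum_congr (fun e he => ?_) v
  · simp [piecewise_eq_of_mem _ _ _ he]
  · simp [piecewise_eq_of_notMem _ _ _ (disjoint_right.mp h.edge_disj he)]

theorem forall_piecewise (h : G.IsEdgeSplit H₁ H₂) {α : Type*} {P : α → Prop} {f g : ℕ → α}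
    (hf : ∀ e ∈ H₁.edges, P (f e)) (hg : ∀ e ∈ H₂.edges, P (g e)) :
    ∀ e ∈ G.edges, P (H₁.edges.piecewise f g e) := by
  intro e he
  rcases mem_union.mp (h.edge_union ▸ he) with he | he
  · rw [piecewise_eq_of_mem _ _ _ he]; exact hf e he
  · rw [piecewise_eq_of_notMem _ _ _ (disjoint_right.mp h.edge_disj he)]
    exact hg e he

theorem isOrientation_piecewise (h : G.IsEdgeSplit H₁ H₂) {o₁ o₂ p₁ p₂ : ℕ → Bool}
    (h₁ : H₁.IsOrientation o₁ o₂) (h₂ : H₂.IsOrientation p₁ p₂) :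
    G.IsOrientation (H₁.edges.piecewise o₁ p₁) (H₁.edges.piecewise o₂ p₂) := by
  intro e he
  rcases mem_union.mp (h.edge_union ▸ he) with he | he
  · simp only [piecewise_eq_of_mem _ _ _ he, ← (h.sub₁.2.2 e he).2.2]
    exact h₁ e he
  · simp only [piecewise_eq_of_notMem _ _ _ (disjoint_right.mp h.edge_disj he),
      ← (h.sub₂.2.2 e he).2.2]
    exact h₂ e he

end IsEdgeSplit

variable {G H₁ H₂ : SignedGraph}

def negEdges (G : SignedGraph) : Finset ℕ := G.edges.filter fun e => G.sign e = false

theorem IsEdgeSplit.card_negEdges (h : G.IsEdgeSplit H₁ H₂) :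
    #G.negEdges = #H₁.negEdges + #H₂.negEdges := by
  rw [negEdges, ← h.edge_union, filter_union,
    card_union_of_disjoint (disjoint_filter_filter h.edge_disj)]
  congr 2 <;> refine filter_congr fun e he => ?_
  · rw [(h.sub₁.2.2 e he).2.2]
  · rw [(h.sub₂.2.2 e he).2.2]

theorem sum_excess (G : SignedGraph) (o₁ o₂ : ℕ → Bool) (φ : ℕ → ℤ) :
    ∑ v ∈ G.verts, G.excess o₁ o₂ φ v =
      ∑ e ∈ G.edges, (dirVal (o₁ e) + dirVal (o₂ e)) * φ e := by
  unfold excess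
  rw [sum_comm]
  refine sum_congr rfl fun e he => ?_
  rw [sum_add_distrib, sum_ite_eq, sum_ite_eq, if_pos (G.fst_mem e he),
    if_pos (G.snd_mem e he), add_mul]

theorem dirVal_ne_zero (b : Bool) : dirVal b ≠ 0 := by
  cases b <;> simp [dirVal]

theorem dirVal_add_dirVal_of_ne {b₁ b₂ : Bool} (h : b₁ ≠ b₂) : dirVal b₁ + dirVal b₂ = 0 := by
  cases b₁ <;> cases b₂ <;> simp_all [dirVal]

theorem FlowAdmissible.card_negEdges_ne_one (h : G.FlowAdmissible) : #G.negEdges ≠ 1 := by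
  obtain ⟨k, o₁, o₂, φ, hflow⟩ := h
  intro hcard
  obtain ⟨f, hf⟩ := card_eq_one.mp hcard
  have hmem : ∀ e ∈ G.edges, G.sign e = false → e = f := fun e he hs =>
    mem_singleton.mp (hf ▸ mem_filter.mpr ⟨he, hs⟩)
  obtain ⟨hfG, hfneg⟩ := mem_filter.mp (hf ▸ mem_singleton_self f : f ∈ G.negEdges)
  have hpos : ∀ e ∈ G.edges, e ≠ f → (dirVal (o₁ e) + dirVal (o₂ e)) * φ e = 0 := by
    intro e he hne
    rw [dirVal_add_dirVal_of_ne ((hflow.orient e he).1 ?_), zero_mul]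
    simpa using mt (hmem e he) hne
  have htotal := G.sum_excess o₁ o₂ φ
  rw [sum_eq_zero fun v hv => hflow.conserve v hv, sum_eq_single_of_mem f hfG hpos,
    (hflow.orient f hfG).2 hfneg] at htotal
  have := hflow.nonzero f hfG
  cases o₂ f <;> simp [dirVal] at htotal <;> omega

theorem excess_ne_zero_of_degree_eq_one {v : ℕ} (hv : G.degree v = 1) {o₁ o₂ : ℕ → Bool}
    {φ : ℕ → ℤ} (hφ : ∀ e ∈ G.edges, φ e ≠ 0) : G.excess o₁ o₂ φ v ≠ 0 := by
  set d : ℕ → ℕ := fun e => (if G.fst e = v then 1 else 0) + (if G.snd e = v then 1 else 0)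
  have hsum : ∑ e ∈ G.edges, d e = 1 := hv
  obtain ⟨e, he, hde⟩ := exists_ne_zero_of_sum_ne_zero (hsum ▸ one_ne_zero)
  have hrest := add_sum_erase G.edges d he
  rw [hsum] at hrest
  have hother : ∀ e' ∈ G.edges, e' ≠ e → G.fst e' ≠ v ∧ G.snd e' ≠ v := by
    intro e' he' hne
    have := sum_eq_zero_iff.mp (by omega : ∑ x ∈ G.edges.erase e, d x = 0) e'
      (mem_erase.mpr ⟨hne, he'⟩)
    simp only [d] at this
    constructor <;> intro h <;> simp [h] at this
  rw [excess, sum_eq_single_of_mem e he fun e' he' hne => by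
    rw [if_neg (hother e' he' hne).1, if_neg (hother e' he' hne).2, add_zero]]
  have h₁ := mul_ne_zero (dirVal_ne_zero (o₁ e)) (hφ e he)
  have h₂ := mul_ne_zero (dirVal_ne_zero (o₂ e)) (hφ e he)
  simp only [d] at hrest hde
  by_cases hfst : G.fst e = v <;> by_cases hsnd : G.snd e = v <;>
    simp only [hfst, hsnd, if_true, if_false, add_zero, zero_add] at hrest hde ⊢ <;>
    omega

theorem FlowAdmissible.degree_ne_one (h : G.FlowAdmissible) (v : ℕ) : G.degree v ≠ 1 := by
  obtain ⟨k, o₁, o₂, φ, hflow⟩ := h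
  intro hv
  have hmem : v ∈ G.verts := by
    by_contra hv'
    rw [degree_eq_incidenceSum, incidenceSum_of_notMem hv'] at hv
    exact zero_ne_one hv
  exact excess_ne_zero_of_degree_eq_one hv hflow.nonzero (hflow.conserve v hmem)

end SignedGraph

section Pseudoflow

variable {G H₁ H₂ : TTGraph} {a b : ℤ} {o₁ o₂ : ℕ → Bool} {φ : ℕ → ℤ}

theorem IsPseudoflow.excess_eq_zero (hp : IsPseudoflow G a b o₁ o₂ φ) {v : ℕ} (hs : v ≠ G.s)
    (ht : v ≠ G.t) : G.excess o₁ o₂ φ v = 0 := by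
  by_cases hv : v ∈ G.verts
  · exact hp.conserve v hv hs ht
  · exact excess_of_notMem hv o₁ o₂ φ

theorem IsPseudoflow.piecewise (h : G.IsEdgeSplit H₁.toSignedGraph H₂.toSignedGraph)
    {a₁ b₁ a₂ b₂ : ℤ} {p₁ p₂ : ℕ → Bool} {ψ : ℕ → ℤ}
    (hp₁ : IsPseudoflow H₁ a₁ b₁ o₁ o₂ φ) (hp₂ : IsPseudoflow H₂ a₂ b₂ p₁ p₂ ψ)
    (hcons : ∀ v, v ≠ G.s → v ≠ G.t → H₁.excess o₁ o₂ φ v + H₂.excess p₁ p₂ ψ v = 0)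
    (hs : H₁.excess o₁ o₂ φ G.s + H₂.excess p₁ p₂ ψ G.s = -a)
    (ht : H₁.excess o₁ o₂ φ G.t + H₂.excess p₁ p₂ ψ G.t = b) :
    IsPseudoflow G a b (H₁.edges.piecewise o₁ p₁) (H₁.edges.piecewise o₂ p₂)
      (H₁.edges.piecewise φ ψ) where
  orient := h.isOrientation_piecewise hp₁.orient hp₂.orient
  nonzero := h.forall_piecewise (P := (· ≠ 0)) hp₁.nonzero hp₂.nonzero
  bounded := h.forall_piecewise (P := (|·| < 6)) hp₁.bounded hp₂.bounded
  conserve v _ hvs hvt := by rw [h.excess_piecewise]; exact hcons v hvs hvt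
  out_s := by rw [h.excess_piecewise]; exact hs
  in_t := by rw [h.excess_piecewise]; exact ht

theorem IsSeriesConn2.isEdgeSplit (hc : IsSeriesConn2 G H₁ H₂) :
    G.IsEdgeSplit H₁.toSignedGraph H₂.toSignedGraph :=
  ⟨hc.sub1, hc.sub2, hc.edge_union, hc.edge_disj⟩

theorem IsParallelConn2.isEdgeSplit (hc : IsParallelConn2 G H₁ H₂) :
    G.IsEdgeSplit H₁.toSignedGraph H₂.toSignedGraph :=
  ⟨hc.sub1, hc.sub2, hc.edge_union, hc.edge_disj⟩

theorem IsSeriesConn2.s_notMem_right (hc : IsSeriesConn2 G H₁ H₂) : G.s ∉ H₂.verts := by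
  intro hs
  have : G.s ∈ H₁.verts ∩ H₂.verts := mem_inter.mpr ⟨hc.src ▸ H₁.s_mem, hs⟩
  rw [hc.vert_inter, mem_singleton, hc.src] at this
  exact H₁.s_ne_t this

theorem IsSeriesConn2.t_notMem_left (hc : IsSeriesConn2 G H₁ H₂) : G.t ∉ H₁.verts := by
  intro ht
  have : G.t ∈ H₁.verts ∩ H₂.verts := mem_inter.mpr ⟨ht, hc.tgt ▸ H₂.t_mem⟩
  rw [hc.vert_inter, mem_singleton, hc.tgt, hc.mid] at this
  exact H₂.s_ne_t this.symm

theorem IsSeriesConn2.degree_s_s15 (hc : IsSeriesConn2 G H₁ H₂) :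
    G.degree G.s = H₁.degree H₁.s := by
  rw [hc.isEdgeSplit.degree_eq, degree_eq_incidenceSum H₂.toSignedGraph,
    incidenceSum_of_notMem hc.s_notMem_right, add_zero, hc.src]

theorem IsSeriesConn2.degree_t_s15 (hc : IsSeriesConn2 G H₁ H₂) :
    G.degree G.t = H₂.degree H₂.t := by
  rw [hc.isEdgeSplit.degree_eq, degree_eq_incidenceSum H₁.toSignedGraph,
    incidenceSum_of_notMem hc.t_notMem_left, zero_add, hc.tgt]

theorem IsSeriesConn2.hasPseudoflow_s15 (hc : IsSeriesConn2 G H₁ H₂) {m : ℤ}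
    (h₁ : HasPseudoflow H₁ a m) (h₂ : HasPseudoflow H₂ m b) : HasPseudoflow G a b := by
  obtain ⟨o₁, o₂, φ, hp₁⟩ := h₁
  obtain ⟨p₁, p₂, ψ, hp₂⟩ := h₂
  refine ⟨_, _, _, hp₁.piecewise hc.isEdgeSplit hp₂ (fun v hvs hvt => ?_) ?_ ?_⟩
  · by_cases hmid : v = H₁.t
    · rw [hmid, hp₁.in_t, hc.mid, hp₂.out_s, add_neg_cancel]
    · rw [hp₁.excess_eq_zero (hc.src ▸ hvs) hmid,
        hp₂.excess_eq_zero (hc.mid ▸ hmid) (hc.tgt ▸ hvt), add_zero]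
  · rw [excess_of_notMem hc.s_notMem_right, hc.src, hp₁.out_s, add_zero]
  · rw [excess_of_notMem hc.t_notMem_left, hc.tgt, hp₂.in_t, zero_add]

theorem IsParallelConn2.hasPseudoflow_s15 (hc : IsParallelConn2 G H₁ H₂) {a₁ b₁ a₂ b₂ : ℤ}
    (h₁ : HasPseudoflow H₁ a₁ b₁) (h₂ : HasPseudoflow H₂ a₂ b₂) :
    HasPseudoflow G (a₁ + a₂) (b₁ + b₂) := by
  obtain ⟨o₁, o₂, φ, hp₁⟩ := h₁
  obtain ⟨p₁, p₂, ψ, hp₂⟩ := h₂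
  refine ⟨_, _, _, hp₁.piecewise hc.isEdgeSplit hp₂ (fun v hvs hvt => ?_) ?_ ?_⟩
  · rw [hp₁.excess_eq_zero (hc.src ▸ hvs) (hc.tgt ▸ hvt),
      hp₂.excess_eq_zero (hc.src_eq ▸ hc.src ▸ hvs) (hc.tgt_eq ▸ hc.tgt ▸ hvt), add_zero]
  · rw [hc.src, hp₁.out_s, hc.src_eq, hp₂.out_s, neg_add]
  · rw [hc.tgt, hp₁.in_t, hc.tgt_eq, hp₂.in_t]

theorem HasPseudoflow.hasNZFlow (h : HasPseudoflow G 0 0) : G.toSignedGraph.HasNZFlow 6 := by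
  obtain ⟨o₁, o₂, φ, hp⟩ := h
  refine ⟨o₁, o₂, φ, hp.orient, hp.nonzero, fun e he => by exact_mod_cast hp.bounded e he,
    fun v hv => ?_⟩
  by_cases hs : v = G.s
  · rw [hs, hp.out_s, neg_zero]
  by_cases ht : v = G.t
  · rw [ht, hp.in_t]
  exact hp.conserve v hv hs ht

end Pseudoflow

section Dipole

def IsDipole (G : TTGraph) : Prop := ∀ e ∈ G.edges, G.Joins e G.s G.t

variable {G : TTGraph}

theorem IsDipole.degree_s_s15 (h : IsDipole G) : G.degree G.s = #G.edges := by
  rw [card_eq_sum_ones]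
  refine sum_congr rfl fun e he => ?_
  rcases h e he with ⟨h₁, h₂⟩ | ⟨h₁, h₂⟩ <;> simp [h₁, h₂, G.s_ne_t.symm]

theorem IsDipole.degree_t_s15 (h : IsDipole G) : G.degree G.t = #G.edges := by
  rw [card_eq_sum_ones]
  refine sum_congr rfl fun e he => ?_
  rcases h e he with ⟨h₁, h₂⟩ | ⟨h₁, h₂⟩ <;> simp [h₁, h₂, G.s_ne_t]

/-- Orient the positive edges from `s` to `t` and let the negative edges point away from
both terminals. -/
theorem IsDipole.hasPseudoflow_s15 (h : IsDipole G) {φ : ℕ → ℤ}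
    (hφ : ∀ e ∈ G.edges, φ e ≠ 0 ∧ |φ e| < 6) :
    HasPseudoflow G (∑ e ∈ G.edges, φ e) (∑ e ∈ G.edges, dirVal (G.sign e) * φ e) := by
  have hst := G.s_ne_t
  refine ⟨fun e => G.sign e && decide (G.fst e = G.t),
    fun e => G.sign e && decide (G.snd e = G.t), φ, fun e he => ?_,
    fun e he => (hφ e he).1, fun e he => (hφ e he).2, fun v _ hs ht => ?_, ?_, ?_⟩
  · rcases h e he with ⟨h₁, h₂⟩ | ⟨h₁, h₂⟩ <;> cases G.sign e <;> simp [h₁, h₂, hst]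
  · refine sum_eq_zero fun e he => ?_
    rcases h e he with ⟨h₁, h₂⟩ | ⟨h₁, h₂⟩ <;> simp [h₁, h₂, Ne.symm hs, Ne.symm ht]
  · rw [excess, ← sum_neg_distrib]
    refine sum_congr rfl fun e he => ?_
    rcases h e he with ⟨h₁, h₂⟩ | ⟨h₁, h₂⟩ <;> simp [h₁, h₂, hst, hst.symm, dirVal]
  · refine sum_congr rfl fun e he => ?_
    rcases h e he with ⟨h₁, h₂⟩ | ⟨h₁, h₂⟩ <;> simp [h₁, h₂, hst]

theorem IsPositiveK2.isDipole_s15 (h : IsPositiveK2 G) : IsDipole G := by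
  obtain ⟨⟨-, e, hes, hj⟩, -⟩ := h
  intro f hf
  rw [hes, mem_singleton] at hf
  exact hf ▸ hj

theorem IsPositiveK2.card_edges_s15 (h : IsPositiveK2 G) : #G.edges = 1 := by
  obtain ⟨⟨-, e, hes, -⟩, -⟩ := h
  rw [hes, card_singleton]

theorem IsPositiveK2.card_negEdges (h : IsPositiveK2 G) : #G.negEdges = 0 :=
  card_eq_zero.mpr (filter_eq_empty_iff.mpr fun e he => by simp [h.2 e he])

theorem IsPositiveK2.hasPseudoflow_s15 (h : IsPositiveK2 G) {a : ℤ} (ha₀ : a ≠ 0) (ha : |a| < 6) :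
    HasPseudoflow G a a := by
  have hflow := h.isDipole_s15.hasPseudoflow_s15 (φ := fun _ => a) fun _ _ => ⟨ha₀, ha⟩
  obtain ⟨⟨-, e, hes, -⟩, hpos⟩ := h
  simpa [hes, hpos e (hes ▸ mem_singleton_self e), dirVal] using hflow

theorem IsUnbalanced2Cycle.isDipole_s15 (h : IsUnbalanced2Cycle G) : IsDipole G := by
  obtain ⟨-, e, f, -, hes, hje, hjf, -⟩ := h
  intro g hg
  rw [hes, mem_insert, mem_singleton] at hg
  rcases hg with rfl | rfl
  · exact hje
  · exact hjf

theorem IsUnbalanced2Cycle.card_edges_s15 (h : IsUnbalanced2Cycle G) : #G.edges = 2 := by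
  obtain ⟨-, e, f, hef, hes, -⟩ := h
  rw [hes, card_pair hef]

theorem IsUnbalanced2Cycle.card_negEdges (h : IsUnbalanced2Cycle G) : #G.negEdges = 1 := by
  obtain ⟨-, e, f, hef, hes, -, -, hsign⟩ := h
  rw [negEdges, hes, filter_insert, filter_singleton]
  cases he : G.sign e <;> cases hf : G.sign f <;> simp_all

/-- The positive edge carries `(a + b) / 2` and the negative edge `(a - b) / 2`. -/
theorem IsUnbalanced2Cycle.hasPseudoflow_s15 (h : IsUnbalanced2Cycle G) {a b : ℤ}
    (hab : a % 2 = b % 2) (hba : b ≠ a) (hba' : b ≠ -a) (ha : |a| < 6) (hb : |b| < 6) :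
    HasPseudoflow G a b := by
  rw [abs_lt] at ha hb
  have hflow := h.isDipole_s15.hasPseudoflow_s15
    (φ := fun e => if G.sign e then (a + b) / 2 else (a - b) / 2) fun e _ => by
      constructor <;> split_ifs <;> first | omega | (rw [abs_lt]; omega)
  obtain ⟨-, e, f, hef, hes, -, -, hsign⟩ := h
  have hsf : G.sign f = !G.sign e := by
    revert hsign; cases G.sign e <;> cases G.sign f <;> simp
  rw [hes, sum_pair hef, sum_pair hef, hsf] at hflow
  convert hflow using 1 <;> cases G.sign e <;> simp [dirVal] <;> omega

end Dipole

/-- Odd values avoid `±a, ±b` among `1, 3, 5`; even ones (then `b = 0`) avoid `±a` among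
`2, 4`. -/
theorem exists_junction_value {a b : ℤ} (hb : b = 0 ∨ b % 2 = 1) (hab : a % 2 = b % 2) :
    ∃ m : ℤ, m ≠ 0 ∧ |m| < 6 ∧ m % 2 = a % 2 ∧ m ≠ a ∧ m ≠ -a ∧ m ≠ b ∧ m ≠ -b := by
  refine ⟨if a % 2 = 0 then (if a = 4 ∨ a = -4 then 2 else 4)
    else if a = 1 ∨ a = -1 ∨ b = 1 ∨ b = -1 then
      (if a = 3 ∨ a = -3 ∨ b = 3 ∨ b = -3 then 5 else 3) else 1, ?_⟩
  rw [abs_lt]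
  split_ifs <;> omega

namespace TTGraph

inductive IsChain : TTGraph → Prop
  | positiveK2 {G : TTGraph} : IsPositiveK2 G → IsChain G
  | unbalanced2Cycle {G : TTGraph} : IsUnbalanced2Cycle G → IsChain G
  | cons {G H Y : TTGraph} : IsSeriesConn2 G H Y → IsPositiveK2 H ∨ IsUnbalanced2Cycle H →
      IsChain Y → IsChain G

theorem _root_.IsSeriesConnList.isChain {G : TTGraph} {l : List TTGraph}
    (h : IsSeriesConnList G l) (hl : ∀ H ∈ l, IsPositiveK2 H ∨ IsUnbalanced2Cycle H) :
    IsChain G := by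
  induction h with
  | two hc =>
    exact .cons hc (hl _ (by simp)) ((hl _ (by simp)).elim .positiveK2 .unbalanced2Cycle)
  | cons hc _ ih =>
    exact .cons hc (hl _ List.mem_cons_self) (ih fun H hH => hl H (List.mem_cons_of_mem _ hH))

theorem _root_.IsString.isChain {G : TTGraph} (h : IsString G) : IsChain G := by
  obtain ⟨hK | hD | ⟨l, hl, hparts⟩, -⟩ := h
  exacts [.positiveK2 hK, .unbalanced2Cycle hD, hl.isChain hparts]

variable {X : TTGraph}

theorem IsChain.degree_pos (hX : IsChain X) : 0 < X.degree X.s ∧ 0 < X.degree X.t := by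
  induction hX with
  | positiveK2 hK => simp [hK.isDipole_s15.degree_s_s15, hK.isDipole_s15.degree_t_s15, hK.card_edges_s15]
  | unbalanced2Cycle hD => simp [hD.isDipole_s15.degree_s_s15, hD.isDipole_s15.degree_t_s15, hD.card_edges_s15]
  | cons hc hH _ ih =>
    rw [hc.degree_s_s15, hc.degree_t_s15]
    refine ⟨?_, ih.2⟩
    rcases hH with hK | hD
    · simp [hK.isDipole_s15.degree_s_s15, hK.card_edges_s15]
    · simp [hD.isDipole_s15.degree_s_s15, hD.card_edges_s15]

theorem IsChain.degree_t_eq_one (hX : IsChain X) (hn : #X.negEdges = 0) :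
    X.degree X.t = 1 := by
  induction hX with
  | positiveK2 hK => rw [hK.isDipole_s15.degree_t_s15, hK.card_edges_s15]
  | unbalanced2Cycle hD => rw [hD.card_negEdges] at hn; exact absurd hn one_ne_zero
  | cons hc _ _ ih =>
    rw [hc.degree_t_s15]
    exact ih (by have := hc.isEdgeSplit.card_negEdges; omega)

theorem IsChain.hasPseudoflow_s15 (hX : IsChain X) {a b : ℤ} (ha : |a| < 6) (hb : |b| < 6)
    (hb_par : b = 0 ∨ b % 2 = 1) (hab : a % 2 = b % 2) (hvalid : ValidPair X a b)
    (h₀ : #X.negEdges = 0 → a = b) (h₁ : #X.negEdges = 1 → b ≠ a ∧ b ≠ -a) :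
    HasPseudoflow X a b := by
  induction hX generalizing a with
  | positiveK2 hK =>
    obtain rfl := h₀ hK.card_negEdges
    refine hK.hasPseudoflow_s15 (hvalid.1.resolve_right ?_) ha
    rw [hK.isDipole_s15.degree_s_s15, hK.card_edges_s15]; norm_num
  | unbalanced2Cycle hD =>
    obtain ⟨hba, hba'⟩ := h₁ hD.card_negEdges
    exact hD.hasPseudoflow_s15 hab hba hba' ha hb
  | @cons _ _ Y hc hH hY ih =>
    have hneg := hc.isEdgeSplit.card_negEdges
    have hvalid_t : b ≠ 0 ∨ 2 ≤ _ := hc.degree_t_s15 ▸ hvalid.2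
    rcases hH with hK | hD
    · have ha₀ : a ≠ 0 := hvalid.1.resolve_right (by
        rw [hc.degree_s_s15, hK.isDipole_s15.degree_s_s15, hK.card_edges_s15]; norm_num)
      rw [hK.card_negEdges, zero_add] at hneg
      exact hc.hasPseudoflow_s15 (hK.hasPseudoflow_s15 ha₀ ha)
        (ih ha hab ⟨Or.inl ha₀, hvalid_t⟩ (hneg ▸ h₀) (hneg ▸ h₁))
    · rw [hD.card_negEdges] at hneg
      by_cases hY₀ : #Y.negEdges = 0
      · obtain ⟨hba, hba'⟩ := h₁ (by omega)
        have hb₀ : b ≠ 0 := hvalid_t.resolve_right (by rw [hY.degree_t_eq_one hY₀]; norm_num)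
        exact hc.hasPseudoflow_s15 (hD.hasPseudoflow_s15 hab hba hba' ha hb)
          (ih hb rfl ⟨Or.inl hb₀, hvalid_t⟩ (fun _ => rfl) fun h => absurd h (by omega))
      · obtain ⟨m, hm₀, hm, hma, hma₁, hma₂, hmb₁, hmb₂⟩ := exists_junction_value hb_par hab
        exact hc.hasPseudoflow_s15 (hD.hasPseudoflow_s15 hma.symm hma₁ hma₂ ha hm)
          (ih hm (hma.trans hab) ⟨Or.inl hm₀, hvalid_t⟩ (fun h => absurd h hY₀)
            fun _ => ⟨hmb₁.symm, by omega⟩)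

theorem IsChain.hasNZFlow_of_flowAdmissible (hX : IsChain X)
    (hfa : X.FlowAdmissible) : X.HasNZFlow 6 := by
  have hdeg := hX.degree_pos
  have hs := hfa.degree_ne_one X.s
  have ht := hfa.degree_ne_one X.t
  exact HasPseudoflow.hasNZFlow <| hX.hasPseudoflow_s15 (by norm_num) (by norm_num) (Or.inl rfl) rfl
    ⟨Or.inr (by omega), Or.inr (by omega)⟩ (fun _ => rfl)
    fun h => absurd h hfa.card_negEdges_ne_one

/-- A string with a single negative edge forces the value `1` entering it to change, hence
`b = 3` in that case. -/
theorem _root_.IsNecklace.hasNZFlow_of_flowAdmissible {G : TTGraph} (hG : IsNecklace G)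
    (hfa : G.FlowAdmissible) : G.HasNZFlow 6 := by
  obtain ⟨H₁, H₂, hc, hH₁, hH₂, -⟩ := hG
  have hneg := hc.isEdgeSplit.card_negEdges
  have hne := hfa.card_negEdges_ne_one
  set b : ℤ := if #H₁.negEdges = 1 ∨ #H₂.negEdges = 1 then 3 else 1
  have hb : (b = 1 ∨ b = 3) ∧ (b = 3 ↔ #H₁.negEdges = 1 ∨ #H₂.negEdges = 1) := by
    simp only [b]; split_ifs <;> simp_all
  have h₁ : HasPseudoflow H₁ 1 b := hH₁.isChain.hasPseudoflow_s15 (by norm_num)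
    (by rw [abs_lt]; omega) (by omega) (by omega) ⟨Or.inl one_ne_zero, Or.inl (by omega)⟩
    (fun _ => by omega) fun _ => by omega
  have h₂ : HasPseudoflow H₂ (-1) (-b) := hH₂.isChain.hasPseudoflow_s15 (by norm_num)
    (by rw [abs_lt]; omega) (by omega) (by omega) ⟨Or.inl (by norm_num), Or.inl (by omega)⟩
    (fun _ => by omega) fun _ => by omega
  have := hc.hasPseudoflow_s15 h₁ h₂
  rw [add_neg_cancel, add_neg_cancel] at this
  exact this.hasNZFlow

end TTGraph

/-- Every flow-admissible string admits a nowhere-zero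
6-flow, and every flow-admissible necklace admits a nowhere-zero 6-flow. -/
theorem flow_admissible_string_or_necklace_has_six_flow :
    (∀ G : TTGraph, IsString G → G.toSignedGraph.FlowAdmissible →
      G.toSignedGraph.HasNZFlow 6) ∧
    (∀ G : TTGraph, IsNecklace G → G.toSignedGraph.FlowAdmissible →
      G.toSignedGraph.HasNZFlow 6) :=
  ⟨fun _ hG hfa => (IsString.isChain hG).hasNZFlow_of_flowAdmissible hfa,
    fun _ hG hfa => IsNecklace.hasNZFlow_of_flowAdmissible hG hfa⟩
end
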